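/- arXiv:1005.4897 — 6 statements merged into one kernel-verified Lean document; each statement's English description precedes it below -/
import Mathlib

section
/- Let G be a finite group and let f : G → {−1, 1} (values in ℝ) satisfy Σ_{x∈G} f(x) = 0. Suppose d is a positive natural number such that every nontrivial complex irreducible finite-dimensional representation of G has dimension at least d. Then the number of pairs (x, y) ∈ G × G with f(x·y) = f(x)·f(y) is at most (1/2)·(1 + 1/√d)·|G|², i.e., the probability over uniformly and independently chosen x, y ∈ G that f(xy) = f(x)f(y) is at most (1/2)(1 + 1/√d). -/
/-!
Let `T v = f ⋆ v` be convolution by `f` on `L²(G)`. Then `∑ f(xy) f(x) f(y) = ⟪f, T f⟫`,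
and the number of pairs with `f(xy) = f(x) f(y)` is `(|G|² + ⟪f, T f⟫) / 2`, so by
Cauchy–Schwarz it suffices to show `‖T v‖² ≤ λ ‖v‖²` with `λ d ≤ |G|²`, where `λ` is the top
eigenvalue of `T* T`. Right translations commute with `T`, so the `λ`-eigenspace is a
subrepresentation of the right regular representation; it is orthogonal to the constants
because `T 1 = 0` (`f` has mean zero), so it contains a nontrivial irreducible representation
and has dimension at least `d`. On the other hand, `λ` times that dimension is at most the
Hilbert–Schmidt norm `∑_{x,y} |f(xy⁻¹)|² = |G|²` of `T`.
-/

open scoped InnerProductSpace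

/-- Gowers' notion of a `d`-quasirandom group. -/
def IsQuasirandom (G : Type*) [Monoid G] (d : ℕ) : Prop :=
  ∀ (V : Type) [AddCommGroup V] [Module ℂ V] [FiniteDimensional ℂ V] (ρ : Representation ℂ G V),
    (∀ U : Submodule ℂ V, (∀ g : G, ∀ v ∈ U, ρ g v ∈ U) → U = ⊥ ∨ U = ⊤) →
    (∃ g : G, ρ g ≠ 1) → d ≤ Module.finrank ℂ V

namespace Subrepresentation

variable {k G V : Type*} [Field k] [Monoid G] [AddCommGroup V] [Module k V]
  {ρ : Representation k G V}

lemma toSubmodule_strictMono :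
    StrictMono (toSubmodule : Subrepresentation ρ → Submodule k V) := fun _ _ h => h

instance [FiniteDimensional k V] : IsAtomic (Subrepresentation ρ) :=
  isAtomic_of_orderBot_wellFounded_lt toSubmodule_strictMono.wellFoundedLT.wf

lemma eq_bot_or_eq_top_of_isAtom {σ : Subrepresentation ρ} (hσ : IsAtom σ)
    (U : Submodule k σ.toSubmodule) (hU : ∀ g, ∀ v ∈ U, σ.toRepresentation g v ∈ U) :
    U = ⊥ ∨ U = ⊤ := by
  let U' : Subrepresentation ρ :=
    ⟨U.map σ.toSubmodule.subtype, by
      rintro g _ ⟨v, hv, rfl⟩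
      exact ⟨_, hU g v hv, rfl⟩⟩
  have hU' : U' ≤ σ := fun _ ⟨v, _, hv⟩ => hv ▸ v.2
  have hinj := Submodule.map_injective_of_injective σ.toSubmodule.injective_subtype
  refine (hσ.le_iff.mp hU').imp (fun h => hinj ?_) (fun h => hinj ?_)
  · rw [Submodule.map_bot]
    exact congrArg toSubmodule h
  · simpa [U'] using congrArg toSubmodule h

end Subrepresentation

theorem IsQuasirandom.le_finrank {G : Type*} {V : Type} [Monoid G] [AddCommGroup V]
    [Module ℂ V] [FiniteDimensional ℂ V] {ρ : Representation ℂ G V} {d : ℕ} (hG : IsQuasirandom G d)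
    {σ : Subrepresentation ρ} (hσ : σ ≠ ⊥) (hfix : ∀ v ∈ σ, (∀ g, ρ g v = v) → v = 0) :
    d ≤ Module.finrank ℂ σ.toSubmodule := by
  obtain ⟨τ, hτ, hτσ⟩ := (eq_bot_or_exists_atom_le σ).resolve_left hσ
  refine le_trans ?_ (Submodule.finrank_mono hτσ)
  refine hG _ τ.toRepresentation (Subrepresentation.eq_bot_or_eq_top_of_isAtom hτ) ?_
  by_contra! htriv
  obtain ⟨v, hv, hv0⟩ := Submodule.exists_mem_ne_zero_of_ne_bot
    fun h => hτ.1 (Subrepresentation.toSubmodule_injective h)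
  exact hv0 (hfix v (hτσ hv) fun g =>
    congrArg Subtype.val (LinearMap.congr_fun (htriv g) ⟨v, hv⟩))

section InnerProductSpace

variable {𝕜 E : Type*} [RCLike 𝕜] [NormedAddCommGroup E] [InnerProductSpace 𝕜 E]

theorem Orthonormal.sum_sum_norm_inner_sq_le {ι κ : Type*} [Fintype ι] [Fintype κ] (r : ι → E)
    {u : κ → E} (hu : Orthonormal 𝕜 u) :
    ∑ j, ∑ i, ‖⟪r i, u j⟫_𝕜‖ ^ 2 ≤ ∑ i, ‖r i‖ ^ 2 := by
  rw [Finset.sum_comm]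
  refine Finset.sum_le_sum fun i _ => ?_
  simpa only [norm_inner_symm] using hu.sum_inner_products_le (s := Finset.univ) (r i)

theorem LinearMap.IsSymmetric.exists_hasEigenvalue_forall_re_inner_le [FiniteDimensional 𝕜 E]
    [Nontrivial E] {T : E →ₗ[𝕜] E} (hT : T.IsSymmetric) :
    ∃ μ : ℝ, Module.End.HasEigenvalue T μ ∧ ∀ x, RCLike.re ⟪T x, x⟫_𝕜 ≤ μ * ‖x‖ ^ 2 := by
  refine ⟨_, hT.hasEigenvalue_iSup_of_finiteDimensional, fun x => ?_⟩
  rcases eq_or_ne x 0 with rfl | hx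
  · simp
  have hbdd : BddAbove
      (Set.range fun x : {x : E // x ≠ 0} => RCLike.re ⟪T x, x⟫_𝕜 / ‖(x : E)‖ ^ 2) :=
    ⟨‖T.toContinuousLinearMap‖, by
      rintro _ ⟨y, rfl⟩
      exact (le_abs_self _).trans (T.toContinuousLinearMap.rayleighQuotient_le_norm y)⟩
  rw [← div_le_iff₀ (by positivity)]
  exact le_ciSup hbdd ⟨x, hx⟩

namespace LinearMap

variable [FiniteDimensional 𝕜 E] {F : Type*} [NormedAddCommGroup F] [InnerProductSpace 𝕜 F]
  [FiniteDimensional 𝕜 F]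

lemma re_inner_adjoint_comp_self_apply (T : E →ₗ[𝕜] F) (x : E) :
    RCLike.re ⟪(adjoint T ∘ₗ T) x, x⟫_𝕜 = ‖T x‖ ^ 2 := by
  rw [comp_apply, adjoint_inner_left, inner_self_eq_norm_sq]

theorem mul_finrank_eigenspace_adjoint_comp_self_le {ι : Type*} [Fintype ι]
    (T : E →ₗ[𝕜] EuclideanSpace 𝕜 ι) (r : ι → E) (hr : ∀ v i, T v i = ⟪r i, v⟫_𝕜) (μ : ℝ) :
    μ * Module.finrank 𝕜 (Module.End.eigenspace (adjoint T ∘ₗ T) μ) ≤ ∑ i, ‖r i‖ ^ 2 := by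
  set W := Module.End.eigenspace (adjoint T ∘ₗ T) μ
  let b := stdOrthonormalBasis 𝕜 W
  have hu : Orthonormal 𝕜 fun j => (b j : E) := b.orthonormal.comp_linearIsometry W.subtypeₗᵢ
  have hnorm (w : W) : ‖T w‖ ^ 2 = μ * ‖w‖ ^ 2 := by
    rw [← re_inner_adjoint_comp_self_apply, Module.End.mem_eigenspace_iff.mp w.2,
      inner_smul_left, RCLike.conj_ofReal, RCLike.re_ofReal_mul, inner_self_eq_norm_sq,
      Submodule.coe_norm]
  calc μ * Module.finrank 𝕜 W = ∑ j, ‖T (b j)‖ ^ 2 := by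
        simp [hnorm, b.orthonormal.1, mul_comm]
    _ = ∑ j, ∑ i, ‖⟪r i, (b j : E)⟫_𝕜‖ ^ 2 := by
        simp only [EuclideanSpace.norm_sq_eq, hr]
    _ ≤ ∑ i, ‖r i‖ ^ 2 := hu.sum_sum_norm_inner_sq_le r

lemma commute_adjoint_of_forall_commute {G : Type*} [Group G] {ρ : Representation 𝕜 G E}
    (hρ : ∀ g x y, ⟪ρ g x, ρ g y⟫_𝕜 = ⟪x, y⟫_𝕜) {T : E →ₗ[𝕜] E} (hT : ∀ g, Commute T (ρ g))
    (g : G) : Commute (adjoint T) (ρ g) := by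
  ext w
  refine ext_inner_right 𝕜 fun u => ?_
  calc ⟪adjoint T (ρ g w), u⟫_𝕜 = ⟪ρ g w, ρ g (T (ρ g⁻¹ u))⟫_𝕜 := by
        rw [adjoint_inner_left, ← Module.End.mul_apply, ← (hT g).eq, Module.End.mul_apply,
          Representation.self_inv_apply]
    _ = ⟪adjoint T w, ρ g⁻¹ u⟫_𝕜 := by rw [hρ, adjoint_inner_left]
    _ = ⟪ρ g (adjoint T w), u⟫_𝕜 := by rw [← hρ g, Representation.self_inv_apply]

lemma inner_eq_zero_of_mem_eigenspace_adjoint_comp_self {T : E →ₗ[𝕜] F} {x w : E}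
    (hx : T x = 0) {μ : 𝕜} (hμ : μ ≠ 0) (hw : w ∈ Module.End.eigenspace (adjoint T ∘ₗ T) μ) :
    ⟪x, w⟫_𝕜 = 0 := by
  have h := adjoint_inner_right T x (T w)
  rw [hx, inner_zero_left, ← comp_apply, Module.End.mem_eigenspace_iff.mp hw,
    inner_smul_right] at h
  exact (mul_eq_zero.mp h).resolve_left hμ

end LinearMap

end InnerProductSpace

lemma Fintype.sum_comp_mul_inv {G M : Type*} [Group G] [Fintype G] [AddCommMonoid M]
    (f : G → M) (x : G) :
    ∑ y, f (x * y⁻¹) = ∑ y, f y :=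
  Equiv.sum_comp ((Equiv.inv G).trans (Equiv.mulLeft x)) f

namespace EuclideanSpace

section Monoid

variable {G : Type*} [Monoid G]

noncomputable def rightRegular : Representation ℂ G (EuclideanSpace ℂ G) where
  toFun g :=
    { toFun := fun v => WithLp.toLp 2 fun x => v (x * g)
      map_add' := fun _ _ => rfl
      map_smul' := fun _ _ => rfl }
  map_one' := by ext v x : 3; simp
  map_mul' g h := by ext v x : 3; exact congrArg v.ofLp (mul_assoc x g h).symm

@[simp]
lemma rightRegular_apply (g : G) (v : EuclideanSpace ℂ G) (x : G) :
    rightRegular g v x = v (x * g) := rfl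

lemma eq_smul_const_of_forall_rightRegular_eq {v : EuclideanSpace ℂ G}
    (hv : ∀ g, rightRegular g v = v) : v = v 1 • WithLp.toLp 2 1 := by
  ext x
  simpa using congrArg (· 1) (hv x)

end Monoid

variable {G : Type*} [Group G] [Fintype G]

lemma inner_rightRegular (g : G) (u v : EuclideanSpace ℂ G) :
    ⟪rightRegular g u, rightRegular g v⟫_ℂ = ⟪u, v⟫_ℂ := by
  simp only [PiLp.inner_apply, rightRegular_apply]
  exact Equiv.sum_comp (Equiv.mulRight g) fun x => ⟪u x, v x⟫_ℂ

noncomputable def convolution (f : G → ℂ) : EuclideanSpace ℂ G →ₗ[ℂ] EuclideanSpace ℂ G where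
  toFun v := WithLp.toLp 2 fun x => ∑ y, f (x * y⁻¹) * v y
  map_add' u v := by ext x; simp [mul_add, Finset.sum_add_distrib]
  map_smul' c v := by ext x; simp [Finset.mul_sum, mul_left_comm]

lemma convolution_apply (f : G → ℂ) (v : EuclideanSpace ℂ G) (x : G) :
    convolution f v x = ∑ y, f (x * y⁻¹) * v y := rfl

lemma convolution_apply_eq_inner (f : G → ℂ) (v : EuclideanSpace ℂ G) (x : G) :
    convolution f v x = ⟪WithLp.toLp 2 fun y => starRingEnd ℂ (f (x * y⁻¹)), v⟫_ℂ := by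
  simp [convolution_apply, PiLp.inner_apply, mul_comm]

lemma commute_convolution_rightRegular (f : G → ℂ) (g : G) :
    Commute (convolution f) (rightRegular g) := by
  ext v x : 3
  simp only [Module.End.mul_apply, convolution_apply, rightRegular_apply]
  refine (Finset.sum_congr rfl fun y _ => ?_).trans (Equiv.sum_comp (Equiv.mulRight g) _)
  simp [mul_assoc]

lemma convolution_const_eq_zero {f : G → ℂ} (hf : ∑ x, f x = 0) :
    convolution f (WithLp.toLp 2 1) = 0 := by
  ext x
  simp only [convolution_apply, Pi.one_apply, mul_one, PiLp.zero_apply]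
  rw [Fintype.sum_comp_mul_inv f x, hf]

lemma inner_convolution (f : G → ℂ) (u v : EuclideanSpace ℂ G) :
    ⟪u, convolution f v⟫_ℂ = ∑ x, ∑ y, starRingEnd ℂ (u (x * y)) * f x * v y := by
  simp only [PiLp.inner_apply, RCLike.inner_apply', convolution_apply, Finset.mul_sum]
  rw [Finset.sum_comm]
  conv_rhs => rw [Finset.sum_comm]
  refine Finset.sum_congr rfl fun y _ => ?_
  refine (Equiv.sum_comp (Equiv.mulRight y) _).symm.trans (Finset.sum_congr rfl fun x _ => ?_)
  simp [mul_assoc]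

end EuclideanSpace

section Quasirandom

open EuclideanSpace LinearMap Module.End

variable {G : Type} [Group G] [Fintype G] {d : ℕ}

theorem IsQuasirandom.le_finrank_eigenspace (hG : IsQuasirandom G d) {f : G → ℂ}
    (hf : ∑ x, f x = 0) {μ : ℝ}
    (hμ : HasEigenvalue (adjoint (convolution f) ∘ₗ convolution f) μ) (hμ0 : μ ≠ 0) :
    d ≤ Module.finrank ℂ (eigenspace (adjoint (convolution f) ∘ₗ convolution f) μ) := by
  have hcomm (g : G) : Commute (adjoint (convolution f) * convolution f) (rightRegular g) :=
    (commute_adjoint_of_forall_commute inner_rightRegular (commute_convolution_rightRegular f)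
      g).mul_left (commute_convolution_rightRegular f g)
  refine hG.le_finrank (σ := ⟨_, fun g => mapsTo_genEigenspace_of_comm (hcomm g) μ 1⟩)
    (fun h => hμ (congrArg Subrepresentation.toSubmodule h)) fun v hv hfix => ?_
  -- `v` is constant, and the constants are orthogonal to the eigenspace
  have h1 : ⟪WithLp.toLp 2 1, v⟫_ℂ = 0 := inner_eq_zero_of_mem_eigenspace_adjoint_comp_self
    (convolution_const_eq_zero hf) (by exact_mod_cast hμ0) hv
  rw [← inner_self_eq_zero (𝕜 := ℂ)]
  nth_rw 1 [eq_smul_const_of_forall_rightRegular_eq hfix]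
  rw [inner_smul_left, h1, mul_zero]

theorem IsQuasirandom.mul_norm_convolution_sq_le (hG : IsQuasirandom G d) {f : G → ℂ}
    (hf : ∑ x, f x = 0) (v : EuclideanSpace ℂ G) :
    d * ‖convolution f v‖ ^ 2 ≤ Fintype.card G * (∑ x, ‖f x‖ ^ 2) * ‖v‖ ^ 2 := by
  set T := convolution f
  obtain ⟨μ, hμ, hle⟩ := (isSymmetric_adjoint_comp_self T).exists_hasEigenvalue_forall_re_inner_le
  have hHS : μ * Module.finrank ℂ (eigenspace (adjoint T ∘ₗ T) μ) ≤
      Fintype.card G * ∑ x, ‖f x‖ ^ 2 := by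
    refine (mul_finrank_eigenspace_adjoint_comp_self_le T _ (convolution_apply_eq_inner f)
      μ).trans_eq ?_
    simp [EuclideanSpace.norm_sq_eq, Fintype.sum_comp_mul_inv fun z => ‖f z‖ ^ 2]
  have hμd : μ * d ≤ Fintype.card G * ∑ x, ‖f x‖ ^ 2 := by
    rcases le_or_gt μ 0 with hμ0 | hμ0
    · exact (mul_nonpos_of_nonpos_of_nonneg hμ0 d.cast_nonneg).trans (by positivity)
    · refine le_trans ?_ hHS
      gcongr
      exact_mod_cast hG.le_finrank_eigenspace hf hμ hμ0.ne'
  calc d * ‖T v‖ ^ 2 ≤ d * (μ * ‖v‖ ^ 2) := by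
        rw [← re_inner_adjoint_comp_self_apply]
        gcongr
        exact hle v
    _ = μ * d * ‖v‖ ^ 2 := by ring
    _ ≤ _ := by gcongr

theorem IsQuasirandom.mul_sq_sum_le (hG : IsQuasirandom G d) {f : G → ℝ}
    (hf : ∀ x, f x = 1 ∨ f x = -1) (hsum : ∑ x, f x = 0) :
    d * (∑ x, ∑ y, f (x * y) * f x * f y) ^ 2 ≤ (Fintype.card G : ℝ) ^ 4 := by
  set n : ℝ := (Fintype.card G : ℝ)
  set u : EuclideanSpace ℂ G := WithLp.toLp 2 fun x => (f x : ℂ)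
  set T := convolution fun x => (f x : ℂ)
  have hf1 (x : G) : ‖(f x : ℂ)‖ ^ 2 = 1 := by rcases hf x with h | h <;> simp [h]
  have hu : ‖u‖ ^ 2 = n := by
    simp only [u, n, EuclideanSpace.norm_sq_eq, hf1, Finset.sum_const,
      Finset.card_univ, nsmul_eq_mul, mul_one]
  have hS : ((∑ x, ∑ y, f (x * y) * f x * f y : ℝ) : ℂ) = ⟪u, T u⟫_ℂ := by
    simp [T, u, inner_convolution]
  have hCS : (∑ x, ∑ y, f (x * y) * f x * f y) ^ 2 ≤ ‖u‖ ^ 2 * ‖T u‖ ^ 2 := by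
    rw [← mul_pow, ← sq_abs, ← Real.norm_eq_abs, ← Complex.norm_real, hS]
    gcongr
    exact norm_inner_le_norm u (T u)
  have hT := hG.mul_norm_convolution_sq_le (f := fun x => (f x : ℂ)) (by exact_mod_cast hsum) u
  simp only [hf1, hu, Finset.sum_const, Finset.card_univ, nsmul_eq_mul, mul_one] at hT
  calc d * (∑ x, ∑ y, f (x * y) * f x * f y) ^ 2 ≤ d * (‖u‖ ^ 2 * ‖T u‖ ^ 2) := by gcongr
    _ = n * (d * ‖T u‖ ^ 2) := by rw [hu]; ring
    _ ≤ n * (n * n * n) := by gcongr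
    _ = n ^ 4 := by ring

end Quasirandom

lemma two_mul_card_eq_card_sq_add_sum {α : Type*} [Mul α] [Fintype α] (f : α → ℝ)
    (hf : ∀ x, f x = 1 ∨ f x = -1) :
    2 * (Nat.card {p : α × α // f (p.1 * p.2) = f p.1 * f p.2} : ℝ) =
      Fintype.card α ^ 2 + ∑ x, ∑ y, f (x * y) * f x * f y := by
  classical
  have hsign : ∀ a b : ℝ, (a = 1 ∨ a = -1) → (b = 1 ∨ b = -1) →
      a * b = 2 * (if a = b then 1 else 0) - 1 := by
    rintro a b (rfl | rfl) (rfl | rfl) <;> norm_num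
  have hprod : ∀ x y, f x * f y = 1 ∨ f x * f y = -1 := fun x y => by
    rcases hf x with h | h <;> rcases hf y with h' | h' <;> simp [h, h']
  simp_rw [mul_assoc, fun x y => hsign _ _ (hf (x * y)) (hprod x y), ← Fintype.sum_prod_type',
    Finset.sum_sub_distrib, ← Finset.mul_sum, Finset.sum_boole, Nat.card_eq_fintype_card,
    Fintype.card_subtype]
  simp [sq]

lemma le_div_sqrt_of_mul_sq_le {a b c : ℝ} (hc : 0 < c) (hb : 0 ≤ b) (h : c * a ^ 2 ≤ b ^ 2) :
    a ≤ b / √c := by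
  rw [le_div_iff₀ (Real.sqrt_pos.mpr hc)]
  refine (le_abs_self _).trans (abs_le_of_sq_le_sq ?_ hb)
  rwa [mul_pow, Real.sq_sqrt hc.le, mul_comm]

theorem parity_upper_bound {G : Type} [Group G] [Fintype G] (f : G → ℝ)
    (hf : ∀ x, f x = 1 ∨ f x = -1) (hsum : ∑ x : G, f x = 0)
    (d : ℕ) (hd : 0 < d)
    (hrep : ∀ (V : Type) [AddCommGroup V] [Module ℂ V] [FiniteDimensional ℂ V]
      (ρ : Representation ℂ G V),
      (∀ U : Submodule ℂ V, (∀ g : G, ∀ v ∈ U, ρ g v ∈ U) → U = ⊥ ∨ U = ⊤) →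
      (∃ g : G, ρ g ≠ 1) → d ≤ Module.finrank ℂ V) :
    (Nat.card {p : G × G // f (p.1 * p.2) = f p.1 * f p.2} : ℝ) ≤
      (1 / 2) * (1 + 1 / Real.sqrt d) * (Fintype.card G : ℝ) ^ 2 := by
  have hcount := two_mul_card_eq_card_sq_add_sum f hf
  have hcorr : ∑ x, ∑ y, f (x * y) * f x * f y ≤ (Fintype.card G : ℝ) ^ 2 / √d :=
    le_div_sqrt_of_mul_sq_le (by exact_mod_cast hd) (by positivity)
      ((IsQuasirandom.mul_sq_sum_le hrep hf hsum).trans_eq (by ring))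
  have hrhs : (1 / 2) * (1 + 1 / √(d : ℝ)) * (Fintype.card G : ℝ) ^ 2 =
      ((Fintype.card G : ℝ) ^ 2 + (Fintype.card G : ℝ) ^ 2 / √d) / 2 := by ring
  linarith
end

section
/- Let G be a finite group with a subgroup H admitting a surjective (hence nontrivial) group homomorphism φ : H → {−1, 1}. Then there exists a function f : G → {−1, 1} with Σ_{x∈G} f(x) = 0 such that the number of pairs (x, y) ∈ G × G with f(x·y) = f(x)·f(y) is at least (1/2)·(1 + (1/2)·(|H|/|G|)·(1 − |N_G(H)|/|G|) + |H|²/|G|²)·|G|², where N_G(H) = {c ∈ G : cHc⁻¹ = H} is the normalizer of H in G. -/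
/-!
Fix `ψ : G → ℤˣ` with `ψ 1 = 1` and `ψ (x * h) = ψ x * φ h` for `h ∈ H`, and twist it by a random
sign `σ` on the left cosets: `f x = σ (x H) * σ H * ψ x`. Every such `f` satisfies the same rule, so
`f (x * z) = -f x` when `φ z = -1`, and `f` has mean zero.

Averaging over `σ`, the product `f (x y) f x f y = σ (x y H) σ (x H) σ (y H) σ H · ψ (x y) ψ x ψ y`
survives only when the four cosets `x y H, x H, y H, H` match up in pairs. The pairs with `y ∈ H`
contribute `|H| |G|`. For `y ∉ H`, those with `x ∈ H ∩ y H y⁻¹` form a sum of a `±1`-valued character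
over that subgroup, which is nonnegative. The remaining ones (`x y ∈ H`, `x H = y H`) number
`|H| · #{x ∉ H | x² ∈ H}`, and a coset of `H` outside `N_G(H)` contains at most `|H| / 2` such `x`,
because they lie in a translate of the proper subgroup `H ∩ x H x⁻¹`. Some `σ` does at least as well
as the average, and `2 · #{(x, y) | f (x y) = f x f y} = |G|² + ∑ f (x y) f x f y`.
-/

open Finset
open scoped Pointwise

section Correlation

variable {M : Type*} [Mul M]

def mulDefect (f : M → ℤˣ) (x y : M) : ℤˣ := f (x * y) * f x * f y

def correlation [Fintype M] (f : M → ℤˣ) : ℤ := ∑ p : M × M, (mulDefect f p.1 p.2 : ℤ)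

theorem mulDefect_eq_one_iff (f : M → ℤˣ) (x y : M) :
    mulDefect f x y = 1 ↔ f (x * y) = f x * f y := by
  rw [mulDefect, mul_assoc, mul_eq_one_iff_eq_inv, Int.units_inv_eq_self]

theorem coe_mulDefect (f : M → ℤˣ) (x y : M) [Decidable (f (x * y) = f x * f y)] :
    (mulDefect f x y : ℤ) = if f (x * y) = f x * f y then 1 else -1 := by
  have := mulDefect_eq_one_iff f x y
  rcases Int.units_eq_one_or (mulDefect f x y) with h | h <;> simp_all

theorem two_mul_card_map_mul_eq [Fintype M] (f : M → ℤˣ) :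
    2 * (Nat.card {p : M × M // f (p.1 * p.2) = f p.1 * f p.2} : ℤ) =
      Fintype.card M ^ 2 + correlation f := by
  classical
  have hsplit := card_filter_add_card_filter_not (s := (univ : Finset (M × M)))
    (fun p => f (p.1 * p.2) = f p.1 * f p.2)
  simp only [correlation, coe_mulDefect, sum_ite, sum_const, nsmul_eq_mul, mul_one, mul_neg,
    Nat.card_eq_fintype_card, Fintype.card_subtype, card_univ, Fintype.card_prod] at hsplit ⊢
  zify at hsplit
  linear_combination hsplit

end Correlation

section Characters

variable {Q : Type*} [DecidableEq Q]

theorem forall_pi_units_mul_four_eq_one_iff (a b c d : Q) :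
    (∀ σ : Q → ℤˣ, σ a * σ b * σ c * σ d = 1) ↔
      (a = b ∧ c = d) ∨ (a = c ∧ b = d) ∨ (a = d ∧ b = c) := by
  refine ⟨fun h => ?_, ?_⟩
  · have key := fun s => h (fun t => if t = s then -1 else 1)
    have ha := key a; have hb := key b; have hc := key c
    by_cases hab : a = b <;> by_cases hac : a = c <;> by_cases had : a = d <;>
      by_cases hbc : b = c <;> by_cases hbd : b = d <;> by_cases hcd : c = d <;>
      simp_all [eq_comm]
  · rintro (⟨rfl, rfl⟩ | ⟨rfl, rfl⟩ | ⟨rfl, rfl⟩) σ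
    · simp [Int.units_mul_self]
    · rw [mul_right_comm (σ a), Int.units_mul_self, one_mul, Int.units_mul_self]
    · rw [mul_assoc (σ a), Int.units_mul_self, mul_one, Int.units_mul_self]

theorem sum_pi_units_mul_four [Fintype Q] (a b c d : Q) :
    ∑ σ : Q → ℤˣ, ((σ a * σ b * σ c * σ d : ℤˣ) : ℤ) =
      if (a = b ∧ c = d) ∨ (a = c ∧ b = d) ∨ (a = d ∧ b = c) then
        (Fintype.card (Q → ℤˣ) : ℤ) else 0 := by
  classical
  let χ : (Q → ℤˣ) →* ℤ := (Units.coeHom ℤ).comp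
    (Pi.evalMonoidHom (fun _ => ℤˣ) a * Pi.evalMonoidHom _ b * Pi.evalMonoidHom _ c *
      Pi.evalMonoidHom _ d)
  have hχ : χ = 1 ↔ ∀ σ : Q → ℤˣ, σ a * σ b * σ c * σ d = 1 := by
    simp [χ, DFunLike.ext_iff, Units.ext_iff]
  convert sum_hom_units χ using 1
  · rfl
  · simp only [hχ, forall_pi_units_mul_four_eq_one_iff]
    split_ifs <;> simp

end Characters

theorem sum_units_int_nonneg {K : Type*} [Group K] [Fintype K] (χ : K →* ℤˣ) :
    0 ≤ ∑ k, (χ k : ℤ) := by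
  classical
  change 0 ≤ ∑ k, (Units.coeHom ℤ).comp χ k
  rw [sum_hom_units]
  split_ifs <;> positivity

namespace Subgroup

variable {G : Type*} [Group G] {H : Subgroup G} {x y : G}

theorem mem_inf_conj_smul_iff : x ∈ H ⊓ MulAut.conj y • H ↔ x ∈ H ∧ y⁻¹ * x * y ∈ H := by
  simp [mem_pointwise_smul_iff_inv_smul_mem]

theorem two_mul_card_inf_conj_smul_le [Finite G] (hy : y ∉ normalizer (H : Set G)) :
    2 * Nat.card ↥(H ⊓ MulAut.conj y • H) ≤ Nat.card H := by
  have hne : H ⊓ MulAut.conj y • H ≠ H := fun heq => hy <| by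
    rw [← inv_mem_iff]
    refine mem_normalizer_fintype fun h hh => ?_
    rw [inv_inv, SetLike.mem_coe] at *
    rw [← heq] at hh
    exact (mem_inf_conj_smul_iff.mp hh).2
  obtain ⟨k, hk⟩ := card_dvd_of_le (inf_le_left : H ⊓ MulAut.conj y • H ≤ H)
  have hpos : 0 < Nat.card (H ⊓ MulAut.conj y • H : Subgroup G) := Nat.card_pos
  rcases k with _ | _ | k
  · exact absurd hk (Nat.card_pos.ne' : Nat.card H ≠ 0)
  · exact absurd (eq_of_le_of_card_ge inf_le_left (by omega)) hne
  · nlinarith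

section Counting

open scoped Classical

variable [Fintype G] (H)

theorem card_filter_mem (K : Subgroup G) : #{x | x ∈ K} = Nat.card K := by
  simp [Nat.card_eq_fintype_card, Fintype.card_subtype]

-- `z ↦ z * x₀⁻¹` lands in `H ∩ x₀ H x₀⁻¹`: `z x₀⁻¹ = z² (x₀ z)⁻¹` and `x₀⁻¹ (z x₀⁻¹) x₀ = x₀⁻¹ z`.
theorem card_sq_mem_coset_le {x₀ : G} (hx₀ : x₀ * x₀ ∈ H) :
    #{z | z * z ∈ H ∧ x₀⁻¹ * z ∈ H} ≤ Nat.card ↥(H ⊓ MulAut.conj x₀ • H) := by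
  rw [← card_filter_mem]
  refine card_le_card_of_injOn (· * x₀⁻¹) (fun z hz => ?_) (mul_left_injective x₀⁻¹).injOn
  simp only [coe_filter, mem_univ, true_and, Set.mem_ofPred_eq] at hz ⊢
  refine mem_inf_conj_smul_iff.mpr ⟨?_, by simpa [mul_assoc] using hz.2⟩
  have hz₀ : x₀ * z ∈ H := by simpa [mul_assoc] using mul_mem hx₀ hz.2
  simpa [mul_assoc] using mul_mem hz.1 (inv_mem hz₀)

theorem two_mul_card_sq_mem_not_mem_normalizer_le :
    2 * #{x | x * x ∈ H ∧ x ∉ normalizer (H : Set G)} ≤ #{x | x ∉ normalizer (H : Set G)} := by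
  set s : Finset G := {x | x * x ∈ H ∧ x ∉ normalizer (H : Set G)}
  set t : Finset G := {x | x ∉ normalizer (H : Set G)}
  -- Double count pairs `(z, w) ∈ s × t` in the same left coset: `z` sees its whole coset, while
  -- `w` sees at most `|H| / 2` elements of `s`.
  have above : ∀ z ∈ s, Nat.card H ≤ #(t.bipartiteAbove (fun z w => z⁻¹ * w ∈ H) z) := by
    intro z hz
    rw [← card_filter_mem]
    refine card_le_card_of_injOn (z * ·) (fun k hk => ?_) (mul_right_injective z).injOn
    simp only [coe_filter, mem_univ, true_and, Set.mem_ofPred_eq] at hk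
    simp only [bipartiteAbove, s, t, coe_filter, mem_filter, mem_univ, true_and,
      Set.mem_ofPred_eq] at hz ⊢
    refine ⟨fun hzk => hz.2 ?_, by simpa using hk⟩
    simpa using mul_mem hzk (inv_mem (le_normalizer hk))
  have below : ∀ w ∈ t, 2 * #(s.bipartiteBelow (fun z w => z⁻¹ * w ∈ H) w) ≤ Nat.card H := by
    intro w _
    obtain hempty | ⟨x₀, hx₀⟩ := (s.bipartiteBelow (fun z w => z⁻¹ * w ∈ H) w).eq_empty_or_nonempty
    · simp [hempty]
    simp only [bipartiteBelow, s, mem_filter, mem_univ, true_and] at hx₀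
    have hsub : s.bipartiteBelow (fun z w => z⁻¹ * w ∈ H) w ⊆
        ({z | z * z ∈ H ∧ x₀⁻¹ * z ∈ H} : Finset G) := by
      intro z hz
      simp only [bipartiteBelow, s, mem_filter, mem_univ, true_and] at hz ⊢
      exact ⟨hz.1.1, by simpa using mul_mem hx₀.2 (inv_mem hz.2)⟩
    calc 2 * #(s.bipartiteBelow (fun z w => z⁻¹ * w ∈ H) w)
        ≤ 2 * Nat.card ↥(H ⊓ MulAut.conj x₀ • H) := by
          grw [card_le_card hsub, card_sq_mem_coset_le H hx₀.1.1]
      _ ≤ Nat.card H := two_mul_card_inf_conj_smul_le hx₀.1.2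
  have hdc := card_mul_le_card_mul (fun z w => z⁻¹ * w ∈ H) above
    (fun w hw => (Nat.le_div_iff_mul_le two_pos).mpr (by linarith [below w hw]))
  have hpos : 0 < Nat.card H := Nat.card_pos
  refine Nat.le_of_mul_le_mul_right ?_ hpos
  calc 2 * #s * Nat.card H ≤ #t * (2 * (Nat.card H / 2)) := by linarith
    _ ≤ #t * Nat.card H := Nat.mul_le_mul_left _ (Nat.mul_div_le _ _)

theorem card_sq_mem_le :
    2 * #{x | x ∉ H ∧ x * x ∈ H} + 2 * Nat.card H ≤
      Nat.card G + Nat.card (normalizer (H : Set G)) := by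
  set N := normalizer (H : Set G)
  have hsplit := card_filter_add_card_filter_not (s := {x | x ∉ H ∧ x * x ∈ H}) (· ∈ N)
  have hin : #{x ∈ ({x | x ∉ H ∧ x * x ∈ H} : Finset G) | x ∈ N} + Nat.card H ≤ Nat.card N := by
    rw [← card_filter_mem, ← card_filter_mem, ← card_union_of_disjoint]
    · refine card_le_card fun x => ?_
      simp only [mem_union, mem_filter, mem_univ, true_and]
      exact fun hx => hx.elim And.right (le_normalizer ·)
    · simp only [disjoint_left, mem_filter, mem_univ, true_and]
      exact fun x hx => hx.1.1
  have hout : 2 * #{x ∈ ({x | x ∉ H ∧ x * x ∈ H} : Finset G) | x ∉ N} + Nat.card N ≤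
      Nat.card G := by
    have hQ : #{x ∈ ({x | x ∉ H ∧ x * x ∈ H} : Finset G) | x ∉ N} =
        #({x | x * x ∈ H ∧ x ∉ N} : Finset G) := by
      rw [filter_filter]
      congr 1
      refine filter_congr fun x _ => ⟨fun hx => ⟨hx.1.2, hx.2⟩, fun hx => ?_⟩
      exact ⟨⟨fun h => hx.2 (le_normalizer h), hx.1⟩, hx.2⟩
    have hG := card_filter_add_card_filter_not (s := (univ : Finset G)) (· ∈ N)
    rw [card_univ, ← Nat.card_eq_fintype_card, card_filter_mem] at hG
    rw [hQ]
    linarith [two_mul_card_sq_mem_not_mem_normalizer_le H]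
  omega

end Counting

end Subgroup

structure IsInducedSign {G : Type*} [Group G] {H : Subgroup G} (φ : H →* ℤˣ) (ψ : G → ℤˣ) :
    Prop where
  map_one : ψ 1 = 1
  map_mul_coe : ∀ (x : G) (h : H), ψ (x * h) = ψ x * φ h

theorem exists_isInducedSign {G : Type*} [Group G] {H : Subgroup G} (φ : H →* ℤˣ) :
    ∃ ψ : G → ℤˣ, IsInducedSign φ ψ := by
  let r : G → H := fun x => ⟨(x : G ⧸ H).out⁻¹ * x, QuotientGroup.eq.mp (QuotientGroup.out_eq' _)⟩
  have hr : ∀ (x : G) (h : H), r (x * h) = r x * h := fun x h =>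
    Subtype.ext <| by simp [r, QuotientGroup.mk_mul_of_mem x h.2, mul_assoc]
  exact ⟨fun x => (φ (r 1))⁻¹ * φ (r x), ⟨inv_mul_cancel _, fun x h => by simp [hr, mul_assoc]⟩⟩

def twist {G : Type*} [Group G] {H : Subgroup G} (σ : G ⧸ H → ℤˣ) (ψ : G → ℤˣ) (x : G) : ℤˣ :=
  σ x * σ ↑(1 : G) * ψ x

theorem mulDefect_twist {G : Type*} [Group G] {H : Subgroup G} (σ : G ⧸ H → ℤˣ) (ψ : G → ℤˣ) (x y : G) :
    mulDefect (twist σ ψ) x y = σ ↑(x * y) * σ x * σ y * σ ↑(1 : G) * mulDefect ψ x y := by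
  simp only [mulDefect, twist, Units.ext_iff, Units.val_mul]
  linear_combination (σ ↑(x * y) * σ x * σ y * ψ (x * y) * ψ x * ψ y * (σ ↑(1 : G) : ℤ)) *
    Int.units_coe_mul_self (σ ↑(1 : G))

namespace IsInducedSign

variable {G : Type*} [Group G] {H : Subgroup G} {φ : H →* ℤˣ} {ψ : G → ℤˣ} {x y : G}

theorem apply_coe (hψ : IsInducedSign φ ψ) (h : H) : ψ h = φ h := by
  simpa [hψ.map_one] using hψ.map_mul_coe 1 h

theorem twist (hψ : IsInducedSign φ ψ) (σ : G ⧸ H → ℤˣ) : IsInducedSign φ (twist σ ψ) where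
  map_one := by rw [_root_.twist, hψ.map_one, mul_one, Int.units_mul_self]
  map_mul_coe x h := by
    simp only [_root_.twist, QuotientGroup.mk_mul_of_mem x h.2, hψ.map_mul_coe, mul_assoc]

theorem sum_eq_zero [Fintype G] (hψ : IsInducedSign φ ψ) (hφ : ∃ h, φ h = -1) :
    ∑ x, (ψ x : ℤ) = 0 := by
  obtain ⟨h, hh⟩ := hφ
  have hshift : ∑ x, (ψ x : ℤ) = ∑ x, (ψ (x * h) : ℤ) :=
    (Equiv.sum_comp (Equiv.mulRight (h : G)) fun x => (ψ x : ℤ)).symm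
  simp only [hψ.map_mul_coe, hh, mul_neg, mul_one, Units.val_neg, sum_neg_distrib] at hshift
  linarith

theorem mulDefect_of_mem_right (hψ : IsInducedSign φ ψ) (hy : y ∈ H) : mulDefect ψ x y = 1 := by
  rw [mulDefect, hψ.map_mul_coe x ⟨y, hy⟩, hψ.apply_coe ⟨y, hy⟩, mul_assoc _ (ψ x),
    Int.units_mul_self]

theorem mulDefect_of_mem_inf_conj (hψ : IsInducedSign φ ψ) (hx : x ∈ H) (hxy : y⁻¹ * x * y ∈ H) :
    mulDefect ψ x y = φ ⟨y⁻¹ * x * y, hxy⟩ * φ ⟨x, hx⟩ := by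
  have hconj : ψ (x * y) = ψ y * φ ⟨y⁻¹ * x * y, hxy⟩ := by
    rw [← hψ.map_mul_coe]; group
  rw [mulDefect, hconj, hψ.apply_coe ⟨x, hx⟩, mul_comm _ (ψ y), ← mul_assoc, ← mul_assoc,
    Int.units_mul_self, one_mul]

end IsInducedSign

section Average

open scoped Classical

variable {G : Type*} [Group G] (H : Subgroup G)

def CosetsPairUp (x y : G) : Prop :=
  y ∈ H ∨ x ∈ H ⊓ MulAut.conj y • H ∨ (x * y ∈ H ∧ x⁻¹ * y ∈ H)

theorem coe_pairs_iff_cosetsPairUp (x y : G) :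
    ((((x * y : G) : G ⧸ H) = x ∧ (y : G ⧸ H) = ↑(1 : G)) ∨
        (((x * y : G) : G ⧸ H) = y ∧ (x : G ⧸ H) = ↑(1 : G)) ∨
        (((x * y : G) : G ⧸ H) = ↑(1 : G) ∧ (x : G ⧸ H) = y)) ↔ CosetsPairUp H x y := by
  have e₁ : (x * y)⁻¹ * x = y⁻¹ := by group
  have e₂ : (x * y)⁻¹ * y = (y⁻¹ * x * y)⁻¹ := by group
  simp only [CosetsPairUp, QuotientGroup.eq, e₁, e₂, mul_one, inv_mem_iff,
    Subgroup.mem_inf_conj_smul_iff]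
  tauto

variable [Fintype G]

noncomputable def pairedCorrelation (ψ : G → ℤˣ) : ℤ :=
  ∑ p : G × G, if CosetsPairUp H p.1 p.2 then (mulDefect ψ p.1 p.2 : ℤ) else 0

theorem sum_correlation_twist (ψ : G → ℤˣ) :
    ∑ σ : G ⧸ H → ℤˣ, correlation (twist σ ψ) =
      Fintype.card (G ⧸ H → ℤˣ) * pairedCorrelation H ψ := by
  simp only [correlation, pairedCorrelation, mulDefect_twist, Units.val_mul (_ * _ * _ * _), mul_sum]
  rw [sum_comm]
  refine sum_congr rfl fun p _ => ?_
  rw [← sum_mul, sum_pi_units_mul_four]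
  simp only [coe_pairs_iff_cosetsPairUp]
  split_ifs <;> simp

theorem exists_correlation_twist_ge (ψ : G → ℤˣ) :
    ∃ σ : G ⧸ H → ℤˣ, pairedCorrelation H ψ ≤ correlation (twist σ ψ) := by
  have hsum : ∑ _σ : G ⧸ H → ℤˣ, pairedCorrelation H ψ ≤
      ∑ σ : G ⧸ H → ℤˣ, correlation (twist σ ψ) := by
    rw [sum_correlation_twist, sum_const, card_univ, nsmul_eq_mul]
  obtain ⟨σ, -, hσ⟩ := exists_le_of_sum_le univ_nonempty hsum
  exact ⟨σ, hσ⟩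

end Average

namespace IsInducedSign

open scoped Classical

variable {G : Type*} [Group G] [Fintype G] {H : Subgroup G} {φ : H →* ℤˣ} {ψ : G → ℤˣ}

theorem sum_mulDefect_inf_conj_nonneg (hψ : IsInducedSign φ ψ) (y : G) :
    0 ≤ ∑ x, if x ∈ H ⊓ MulAut.conj y • H then (mulDefect ψ x y : ℤ) else 0 := by
  have hmul : ∀ a b : ↥(H ⊓ MulAut.conj y • H),
      mulDefect ψ ↑(a * b) y = mulDefect ψ a y * mulDefect ψ b y := by
    rintro ⟨a, ha⟩ ⟨b, hb⟩
    change mulDefect ψ (a * b) y = mulDefect ψ a y * mulDefect ψ b y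
    obtain ⟨haH, hay⟩ := Subgroup.mem_inf_conj_smul_iff.mp ha
    obtain ⟨hbH, hby⟩ := Subgroup.mem_inf_conj_smul_iff.mp hb
    have hab : y⁻¹ * (a * b) * y ∈ H := by simpa [mul_assoc] using mul_mem hay hby
    rw [hψ.mulDefect_of_mem_inf_conj haH hay, hψ.mulDefect_of_mem_inf_conj hbH hby,
      hψ.mulDefect_of_mem_inf_conj (mul_mem haH hbH) hab,
      show (⟨y⁻¹ * (a * b) * y, hab⟩ : H) = ⟨_, hay⟩ * ⟨_, hby⟩ from Subtype.ext (by simp; group),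
      show (⟨a * b, mul_mem haH hbH⟩ : H) = ⟨a, haH⟩ * ⟨b, hbH⟩ from rfl, map_mul, map_mul,
      mul_mul_mul_comm]
  rw [← sum_filter, sum_subtype _ (fun x => mem_filter_univ x) (fun x => (mulDefect ψ x y : ℤ))]
  exact sum_units_int_nonneg
    (MonoidHom.mk' (fun k : ↥(H ⊓ MulAut.conj y • H) => mulDefect ψ k y) hmul)

theorem pairedCorrelation_ge (hψ : IsInducedSign φ ψ) :
    (Nat.card H * Nat.card G : ℤ) - Nat.card H * #{x | x ∉ H ∧ x * x ∈ H} ≤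
      pairedCorrelation H ψ := by
  set C : Finset (G × G) := {p | p.2 ∉ H ∧ p.1 * p.2 ∈ H ∧ p.1⁻¹ * p.2 ∈ H}
  have hpoint : ∀ p : G × G, ((if p.2 ∈ H then 1 else 0) +
      (if p.2 ∉ H ∧ p.1 ∈ H ⊓ MulAut.conj p.2 • H then (mulDefect ψ p.1 p.2 : ℤ) else 0)) -
      (if p ∈ C then 1 else 0) ≤
      if CosetsPairUp H p.1 p.2 then (mulDefect ψ p.1 p.2 : ℤ) else 0 := by
    rintro ⟨x, y⟩
    by_cases hy : y ∈ H
    · simp [C, CosetsPairUp, hy, hψ.mulDefect_of_mem_right hy]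
    · rcases Int.units_eq_one_or (mulDefect ψ x y) with h | h <;>
        simp only [C, CosetsPairUp, mem_filter, mem_univ, true_and, hy, h] <;>
        split_ifs <;> simp_all
      all_goals tauto
  have hA : ∑ p : G × G, (if p.2 ∈ H then (1 : ℤ) else 0) = Nat.card H * Nat.card G := by
    rw [sum_boole, ← univ_product_univ, filter_product_right (· ∈ H), card_product, mul_comm]
    simp [Nat.card_eq_fintype_card, Fintype.card_subtype]
  have hB : 0 ≤ ∑ p : G × G,
      if p.2 ∉ H ∧ p.1 ∈ H ⊓ MulAut.conj p.2 • H then (mulDefect ψ p.1 p.2 : ℤ) else 0 := by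
    rw [Fintype.sum_prod_type_right]
    refine sum_nonneg fun y _ => ?_
    by_cases hy : y ∈ H
    · simp [hy]
    · simpa [hy] using hψ.sum_mulDefect_inf_conj_nonneg y
  have hC : #C ≤ Nat.card H * #{x | x ∉ H ∧ x * x ∈ H} := by
    have hsub : C ⊆ (({x | x ∉ H ∧ x * x ∈ H} : Finset G) ×ˢ ({x | x ∈ H} : Finset G)).image
        fun p => (p.1, p.1⁻¹ * p.2) := by
      rintro ⟨x, y⟩ hp
      simp only [C, mem_filter, mem_univ, true_and] at hp
      obtain ⟨hy, hxy, hxy'⟩ := hp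
      refine mem_image.mpr ⟨(x, x * y), ?_, by simp⟩
      simp only [mem_product, mem_filter, mem_univ, true_and]
      refine ⟨⟨fun hx => hy ?_, ?_⟩, hxy⟩
      · simpa using mul_mem (inv_mem hx) hxy
      · simpa [mul_assoc] using mul_mem hxy (inv_mem hxy')
    calc #C ≤ _ := card_le_card hsub
      _ ≤ _ := card_image_le
      _ = _ := by rw [card_product, Subgroup.card_filter_mem, mul_comm]
  calc (Nat.card H * Nat.card G : ℤ) - Nat.card H * #{x | x ∉ H ∧ x * x ∈ H}
      ≤ ∑ p : G × G, (((if p.2 ∈ H then 1 else 0) +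
          (if p.2 ∉ H ∧ p.1 ∈ H ⊓ MulAut.conj p.2 • H then (mulDefect ψ p.1 p.2 : ℤ) else 0)) -
          (if p ∈ C then 1 else 0)) := by
        rw [sum_sub_distrib, sum_add_distrib, hA, sum_boole, filter_mem_eq_inter, univ_inter]
        have hC' : (#C : ℤ) ≤ Nat.card H * #{x | x ∉ H ∧ x * x ∈ H} := by exact_mod_cast hC
        linarith
    _ ≤ pairedCorrelation H ψ := sum_le_sum fun p _ => hpoint p

theorem two_mul_pairedCorrelation_ge (hψ : IsInducedSign φ ψ) :
    (Nat.card H * Nat.card G : ℤ) - Nat.card H * Nat.card (Subgroup.normalizer (H : Set G)) +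
      2 * Nat.card H ^ 2 ≤ 2 * pairedCorrelation H ψ := by
  have hQ : (Nat.card H : ℤ) * (2 * #{x | x ∉ H ∧ x * x ∈ H} + 2 * Nat.card H) ≤
      Nat.card H * (Nat.card G + Nat.card (Subgroup.normalizer (H : Set G))) := by
    exact_mod_cast Nat.mul_le_mul_left _ (Subgroup.card_sq_mem_le H)
  linarith [hψ.pairedCorrelation_ge]

theorem exists_four_mul_card_map_mul_ge (hψ : IsInducedSign φ ψ) :
    ∃ f : G → ℤˣ, IsInducedSign φ f ∧
      (2 * Nat.card G ^ 2 + Nat.card H * Nat.card G -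
          Nat.card H * Nat.card (Subgroup.normalizer (H : Set G)) + 2 * Nat.card H ^ 2 : ℤ) ≤
        4 * Nat.card {p : G × G // f (p.1 * p.2) = f p.1 * f p.2} := by
  obtain ⟨σ, hσ⟩ := exists_correlation_twist_ge H ψ
  refine ⟨_root_.twist σ ψ, hψ.twist σ, ?_⟩
  have hagree := two_mul_card_map_mul_eq (_root_.twist σ ψ)
  rw [← Nat.card_eq_fintype_card] at hagree
  linarith [hψ.two_mul_pairedCorrelation_ge]

end IsInducedSign

theorem parity_lower_bound {G : Type} [Group G] [Fintype G] (H : Subgroup G)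
    (φ : H →* ℤˣ) (hφ : Function.Surjective φ) :
    ∃ f : G → ℝ, (∀ x, f x = 1 ∨ f x = -1) ∧ (∑ x : G, f x = 0) ∧
      (1 / 2 : ℝ) * (1 + (1 / 2) * ((Nat.card H : ℝ) / (Nat.card G : ℝ)) *
          (1 - (Nat.card (Subgroup.normalizer (H : Set G)) : ℝ) / (Nat.card G : ℝ)) +
          (Nat.card H : ℝ) ^ 2 / (Nat.card G : ℝ) ^ 2) * (Nat.card G : ℝ) ^ 2 ≤
        (Nat.card {p : G × G // f (p.1 * p.2) = f p.1 * f p.2} : ℝ) := by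
  obtain ⟨ψ, hψ⟩ := exists_isInducedSign φ
  obtain ⟨f, hf, hcount⟩ := hψ.exists_four_mul_card_map_mul_ge
  refine ⟨fun x => ((f x : ℤ) : ℝ), fun x => ?_, ?_, ?_⟩
  · rcases Int.units_eq_one_or (f x) with h | h <;> simp [h]
  · beta_reduce
    exact_mod_cast hf.sum_eq_zero (hφ (-1))
  have hcard : Nat.card {p : G × G // ((f (p.1 * p.2) : ℤ) : ℝ) = (f p.1 : ℤ) * (f p.2 : ℤ)} =
      Nat.card {p : G × G // f (p.1 * p.2) = f p.1 * f p.2} := by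
    simp [← Int.cast_mul, Units.ext_iff]
  have hcountR := (Int.cast_le (R := ℝ)).mpr hcount
  push_cast at hcountR
  have hG : (0 : ℝ) < Nat.card G := by exact_mod_cast Nat.card_pos
  rw [hcard]
  field_simp
  linarith
end

section
/- Let G be a finite group with a subgroup H admitting a surjective (hence nontrivial) group homomorphism φ : H → {−1, 1}. Suppose there exists a set T ⊆ G of representatives for the left cosets of H (one representative per coset) such that c² = 1 for every c ∈ T. Then there exists a function f : G → {−1, 1} with Σ_{x∈G} f(x) = 0 such that the number of pairs (x, y) ∈ G × G with f(x·y) = f(x)·f(y) is at least (1/2)·(1 + |H|/|G|)·|G|². -/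
/-!
Write `g = c * h` with `c ∈ T`, `h ∈ H`, and for a choice of signs `ε` on the left cosets put
`f_ε (c * h) = ε (c H) * φ h`. Every `f_ε` is right `H`-equivariant, `f (g * k) = f g * φ k`, so it
has mean zero as `φ` is onto, and its correlation `∑ x y, f (x y) f x f y` reduces to
`|H| ∑ x, ∑ c ∈ T, f (x c) f x f c`.
Averaging `f_ε 1` times this correlation over all `ε`, the terms with `c ∈ H` give `|H| |G|`.
For `c ∉ H` only the pairings `{H, c H} = {x H, x c H}` survive the average over the signs, and
since `c = c⁻¹` they contribute twice the character sum `∑ x ∈ H ∩ c H c⁻¹, φ x φ (c⁻¹ x c) ≥ 0`.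
Hence some `f = f_ε 1 • f_ε` has correlation at least `|H| |G|`, that is, at least
`(|G|² + |H| |G|) / 2` pairs with `f (x y) = f x f y`.
-/

open Finset

section Signs

variable {α : Type*} [Fintype α] [DecidableEq α]

theorem sum_sign_mul_eq_zero (a : α) (R : (α → ℤˣ) → ℤ)
    (hR : ∀ ε s, R (Function.update ε a s) = R ε) :
    ∑ ε : α → ℤˣ, (ε a : ℤ) * R ε = 0 := by
  let flip : (α → ℤˣ) → α → ℤˣ := fun ε => Function.update ε a (-ε a)
  have hflip : Function.Involutive flip := fun ε => by simp [flip]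
  have h := Fintype.sum_equiv hflip.toPerm _ (fun ε => (ε a : ℤ) * R ε) fun _ => rfl
  simp only [Function.Involutive.coe_toPerm, flip, Function.update_self, hR, Units.val_neg,
    neg_mul, sum_neg_distrib] at h
  exact self_eq_neg.mp h.symm

theorem sum_sign_mul_four_eq_zero_of_ne {a b c d : α} (hb : b ≠ a) (hc : c ≠ a) (hd : d ≠ a) :
    ∑ ε : α → ℤˣ, ((ε a * ε b * ε c * ε d : ℤˣ) : ℤ) = 0 := by
  simpa only [Units.val_mul, mul_assoc] using
    sum_sign_mul_eq_zero a (fun ε => (ε b * ε c * ε d : ℤ)) fun ε s => by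
      simp only [Function.update_of_ne hb, Function.update_of_ne hc, Function.update_of_ne hd]

theorem sum_sign_mul_four_eq_zero {a b c d : α} (hab : a ≠ b) (h : s(a, b) ≠ s(c, d)) :
    ∑ ε : α → ℤˣ, ((ε a * ε b * ε c * ε d : ℤˣ) : ℤ) = 0 := by
  rw [Ne, Sym2.eq_iff] at h
  by_cases ha : c ≠ a ∧ d ≠ a
  · exact sum_sign_mul_four_eq_zero_of_ne hab.symm ha.1 ha.2
  by_cases hb : c ≠ b ∧ d ≠ b
  · convert sum_sign_mul_four_eq_zero_of_ne hab hb.1 hb.2 using 3 with ε; ac_rfl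
  grind

end Signs

theorem two_mul_card_eq_card_add_sum {X : Type*} [Fintype X] (u v : X → ℤˣ) :
    2 * (Nat.card {x // u x = v x} : ℤ) = Fintype.card X + ∑ x, ((u x * v x : ℤˣ) : ℤ) := by
  classical
  have h : ∀ x, 1 + ((u x * v x : ℤˣ) : ℤ) = if u x = v x then 2 else 0 := fun x => by
    rcases Int.units_eq_one_or (u x) with hu | hu <;>
      rcases Int.units_eq_one_or (v x) with hv | hv <;> simp [hu, hv]
  calc 2 * (Nat.card {x // u x = v x} : ℤ) = ∑ x, if u x = v x then 2 else 0 := by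
        rw [sum_ite, sum_const_zero, sum_const, Nat.card_eq_fintype_card, Fintype.card_subtype]
        simp [mul_comm]
    _ = Fintype.card X + ∑ x, ((u x * v x : ℤˣ) : ℤ) := by
        rw [← sum_congr rfl fun x _ => h x, sum_add_distrib]
        simp

section Correlation

variable {M : Type*} [Mul M] [Fintype M]

def multCorrelation (u : M → ℤˣ) : ℤ :=
  ∑ p : M × M, ((u (p.1 * p.2) * (u p.1 * u p.2) : ℤˣ) : ℤ)

theorem two_mul_card_eq_card_sq_add_multCorrelation (u : M → ℤˣ) :
    2 * (Nat.card {p : M × M // u (p.1 * p.2) = u p.1 * u p.2} : ℤ) =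
      Nat.card M ^ 2 + multCorrelation u := by
  rw [two_mul_card_eq_card_add_sum, Fintype.card_prod, Nat.card_eq_fintype_card, multCorrelation]
  push_cast
  ring

theorem multCorrelation_const_mul (s : ℤˣ) (u : M → ℤˣ) :
    multCorrelation (fun g => s * u g) = s * multCorrelation u := by
  simp only [multCorrelation, mul_sum, ← Units.val_mul]
  refine sum_congr rfl fun p _ => congrArg _ ?_
  calc s * u (p.1 * p.2) * (s * u p.1 * (s * u p.2))
      = s * s * (s * (u (p.1 * p.2) * (u p.1 * u p.2))) := by ac_rfl
    _ = s * (u (p.1 * p.2) * (u p.1 * u p.2)) := by rw [Int.units_mul_self, one_mul]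

end Correlation

section GroupSums

variable {G : Type*} [Group G] [Fintype G]

theorem sum_eq_zero_of_mul_right_eq_neg {M : Type*} [AddCommGroup M] [IsAddTorsionFree M]
    (f : G → M) (k : G) (hk : ∀ g, f (g * k) = -f g) : ∑ g, f g = 0 := by
  have h := Fintype.sum_equiv (Equiv.mulRight k) (fun g => f (g * k)) f fun _ => rfl
  simp only [hk, sum_neg_distrib] at h
  exact self_eq_neg.mp h.symm

theorem sum_nonneg_of_mul_eq_mul_of_ne_zero {R : Type*} [CommRing R] [LinearOrder R]
    [IsStrictOrderedRing R] (ψ : G → R) (hψ : ∀ x y, ψ x ≠ 0 → ψ (x * y) = ψ x * ψ y) :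
    0 ≤ ∑ x, ψ x := by
  by_cases hneg : ∃ x₀, ψ x₀ < 0
  · obtain ⟨x₀, hx₀⟩ := hneg
    -- translating by `x₀` multiplies the sum by `ψ x₀ ≠ 1`
    have h : ∑ x, ψ x = ψ x₀ * ∑ x, ψ x := by
      rw [mul_sum]
      exact (Fintype.sum_equiv (Equiv.mulLeft x₀) _ _ fun x => (hψ x₀ x hx₀.ne).symm).symm
    nlinarith
  · push Not at hneg
    exact sum_nonneg fun x _ => hneg x

end GroupSums

namespace MonoidHom

variable {G : Type*} [Group G] {H : Subgroup G} (φ : H →* ℤˣ)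

open Classical in
noncomputable def extendByZero (g : G) : ℤ := if h : g ∈ H then (φ ⟨g, h⟩ : ℤ) else 0

theorem extendByZero_of_mem {g : G} (hg : g ∈ H) : φ.extendByZero g = φ ⟨g, hg⟩ := dif_pos hg

theorem extendByZero_of_notMem {g : G} (hg : g ∉ H) : φ.extendByZero g = 0 := dif_neg hg

theorem extendByZero_ne_zero_iff {g : G} : φ.extendByZero g ≠ 0 ↔ g ∈ H := by
  by_cases hg : g ∈ H
  · simp [hg, φ.extendByZero_of_mem hg]
  · simp [hg, φ.extendByZero_of_notMem hg]

theorem extendByZero_mul_ne_zero_iff {a b : G} :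
    φ.extendByZero a * φ.extendByZero b ≠ 0 ↔ a ∈ H ∧ b ∈ H := by
  rw [mul_ne_zero_iff, φ.extendByZero_ne_zero_iff, φ.extendByZero_ne_zero_iff]

theorem extendByZero_mul_of_mem {x : G} (hx : x ∈ H) (y : G) :
    φ.extendByZero (x * y) = φ.extendByZero x * φ.extendByZero y := by
  by_cases hy : y ∈ H
  · simp only [φ.extendByZero_of_mem hx, φ.extendByZero_of_mem hy,
      φ.extendByZero_of_mem (H.mul_mem hx hy), ← Units.val_mul, ← map_mul]
    rfl
  · rw [φ.extendByZero_of_notMem hy,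
      φ.extendByZero_of_notMem ((H.mul_mem_cancel_left hx).not.2 hy), mul_zero]

theorem sum_extendByZero_mul_conj_nonneg [Fintype G] (c : G) :
    0 ≤ ∑ x, φ.extendByZero x * φ.extendByZero (c⁻¹ * x * c) := by
  refine sum_nonneg_of_mul_eq_mul_of_ne_zero _ fun x y hxy => ?_
  obtain ⟨hx, hcx⟩ := φ.extendByZero_mul_ne_zero_iff.1 hxy
  rw [φ.extendByZero_mul_of_mem hx, show c⁻¹ * (x * y) * c = c⁻¹ * x * c * (c⁻¹ * y * c) by group,
    φ.extendByZero_mul_of_mem hcx]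
  ring

end MonoidHom

section Equivariant

open Subgroup

variable {G : Type*} [Group G] {H : Subgroup G} (φ : H →* ℤˣ) {u : G → ℤˣ}

theorem mul_apply_mul_of_equivariant (hu : ∀ g (k : H), u (g * k) = u g * φ k) (g : G) (k : H) :
    u g * u (g * k) = φ k := by
  rw [hu, ← mul_assoc, Int.units_mul_self, one_mul]

theorem apply_mul_mul_eq_of_equivariant {T : Set G} (hT : IsComplement T H)
    (hu : ∀ g (k : H), u (g * k) = u g * φ k) (x y : G) :
    u (x * y) * (u x * u y) = u (x * (hT.equiv y).1) * (u x * u (hT.equiv y).1) := by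
  set c : G := ((hT.equiv y).1 : G)
  set k : H := (hT.equiv y).2
  have hy : y = c * k := (hT.equiv_fst_mul_equiv_snd y).symm
  calc u (x * y) * (u x * u y) = u (x * c * k) * (u x * u (c * k)) := by rw [hy, mul_assoc]
    _ = u (x * c) * (u x * u c) * (φ k * φ k) := by rw [hu, hu]; ac_rfl
    _ = u (x * c) * (u x * u c) := by rw [Int.units_mul_self, mul_one]

theorem prod_four_eq_one_of_equivariant_of_mem (hu : ∀ g (k : H), u (g * k) = u g * φ k)
    {c : G} (hc : c ∈ H) (x : G) : u 1 * u c * u x * u (x * c) = 1 :=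
  calc u 1 * u c * u x * u (x * c) = (u 1 * u (1 * c)) * (u x * u (x * c)) := by
        rw [one_mul]; ac_rfl
    _ = φ ⟨c, hc⟩ * φ ⟨c, hc⟩ := by
        rw [mul_apply_mul_of_equivariant φ hu 1 ⟨c, hc⟩,
          mul_apply_mul_of_equivariant φ hu x ⟨c, hc⟩]
    _ = 1 := Int.units_mul_self _

theorem prod_four_of_equivariant_of_mem_of_conj_mem (hu : ∀ g (k : H), u (g * k) = u g * φ k)
    {c x : G} (hx : x ∈ H) (hcx : c⁻¹ * x * c ∈ H) :
    u 1 * u c * u x * u (x * c) = φ ⟨x, hx⟩ * φ ⟨c⁻¹ * x * c, hcx⟩ :=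
  calc u 1 * u c * u x * u (x * c) = (u 1 * u (1 * x)) * (u c * u (c * (c⁻¹ * x * c))) := by
        rw [one_mul, show c * (c⁻¹ * x * c) = x * c by group]; ac_rfl
    _ = _ := by rw [mul_apply_mul_of_equivariant φ hu 1 ⟨x, hx⟩,
        mul_apply_mul_of_equivariant φ hu c ⟨_, hcx⟩]

theorem prod_four_of_equivariant_of_inv_mul_mem_of_mul_mem
    (hu : ∀ g (k : H), u (g * k) = u g * φ k) {c x : G} (hcx : c⁻¹ * x ∈ H) (hxc : x * c ∈ H) :
    u 1 * u c * u x * u (x * c) = φ ⟨c⁻¹ * x, hcx⟩ * φ ⟨x * c, hxc⟩ :=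
  calc u 1 * u c * u x * u (x * c) = (u c * u (c * (c⁻¹ * x))) * (u 1 * u (1 * (x * c))) := by
        rw [one_mul, mul_inv_cancel_left]; ac_rfl
    _ = _ := by rw [mul_apply_mul_of_equivariant φ hu c ⟨_, hcx⟩,
        mul_apply_mul_of_equivariant φ hu 1 ⟨_, hxc⟩]

end Equivariant

namespace Subgroup.IsComplement

variable {G : Type*} [Group G] {H : Subgroup G} {T : Set G} (hT : IsComplement T H)
  (φ : H →* ℤˣ)

noncomputable def cosetSignExtension (ε : G ⧸ H → ℤˣ) (g : G) : ℤˣ := ε g * φ (hT.equiv g).2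

theorem cosetSignExtension_mul (ε : G ⧸ H → ℤˣ) (g : G) (k : H) :
    hT.cosetSignExtension φ ε (g * k) = hT.cosetSignExtension φ ε g * φ k := by
  rw [cosetSignExtension, cosetSignExtension, hT.equiv_mul_right,
    QuotientGroup.mk_mul_of_mem _ k.2, map_mul, mul_assoc]

section Average

variable [Fintype (G ⧸ H)] [DecidableEq (G ⧸ H)]

theorem sum_cosetSignExtension_prod_four {c : G} (hc : c ∉ H) (x : G) :
    ∑ ε : G ⧸ H → ℤˣ, ((hT.cosetSignExtension φ ε 1 * hT.cosetSignExtension φ ε c *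
      hT.cosetSignExtension φ ε x * hT.cosetSignExtension φ ε (x * c) : ℤˣ) : ℤ) =
      Fintype.card (G ⧸ H → ℤˣ) * (φ.extendByZero x * φ.extendByZero (c⁻¹ * x * c) +
        φ.extendByZero (c⁻¹ * x) * φ.extendByZero (x * c)) := by
  have hu := hT.cosetSignExtension_mul φ
  by_cases h₁ : x ∈ H ∧ c⁻¹ * x * c ∈ H
  · have hcx : c⁻¹ * x ∉ H := fun h => hc (by simpa using H.mul_mem h₁.1 (H.inv_mem h))
    simp [prod_four_of_equivariant_of_mem_of_conj_mem φ (hu _) h₁.1 h₁.2,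
      φ.extendByZero_of_mem h₁.1, φ.extendByZero_of_mem h₁.2, φ.extendByZero_of_notMem hcx]
  by_cases h₂ : c⁻¹ * x ∈ H ∧ x * c ∈ H
  · have hx : x ∉ H := fun h => h₁ ⟨h, by
      simpa [mul_assoc] using H.mul_mem (H.mul_mem h₂.1 (H.inv_mem h)) h₂.2⟩
    simp [prod_four_of_equivariant_of_inv_mul_mem_of_mul_mem φ (hu _) h₂.1 h₂.2,
      φ.extendByZero_of_mem h₂.1, φ.extendByZero_of_mem h₂.2, φ.extendByZero_of_notMem hx]
  have hΦ₁ : φ.extendByZero x * φ.extendByZero (c⁻¹ * x * c) = 0 := by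
    by_contra h; exact h₁ (φ.extendByZero_mul_ne_zero_iff.1 h)
  have hΦ₂ : φ.extendByZero (c⁻¹ * x) * φ.extendByZero (x * c) = 0 := by
    by_contra h; exact h₂ (φ.extendByZero_mul_ne_zero_iff.1 h)
  -- otherwise one of the cosets `H, c H, x H, x c H` occurs once, and its sign averages out
  have h1c : ((1 : G) : G ⧸ H) ≠ c := by simpa [QuotientGroup.eq] using hc
  have hpairs : s(((1 : G) : G ⧸ H), (c : G ⧸ H)) ≠ s((x : G ⧸ H), ((x * c : G) : G ⧸ H)) := by
    simp only [Ne, Sym2.eq_iff, QuotientGroup.eq, inv_one, one_mul]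
    rintro (⟨hx, hxc⟩ | ⟨hxc, hx⟩)
    · exact h₁ ⟨hx, by simpa [mul_assoc] using hxc⟩
    · exact h₂ ⟨hx, hxc⟩
  have hsplit : ∀ ε : G ⧸ H → ℤˣ, hT.cosetSignExtension φ ε 1 * hT.cosetSignExtension φ ε c *
      hT.cosetSignExtension φ ε x * hT.cosetSignExtension φ ε (x * c) =
      ε (1 : G) * ε c * ε x * ε (x * c : G) * (φ (hT.equiv 1).2 * φ (hT.equiv c).2 *
        φ (hT.equiv x).2 * φ (hT.equiv (x * c)).2) := fun ε => by
    simp only [cosetSignExtension]; ac_rfl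
  simp only [hsplit, Units.val_mul _ (_ * _ * _ * _)]
  rw [← sum_mul, sum_sign_mul_four_eq_zero h1c hpairs, hΦ₁, hΦ₂]
  simp

variable [Fintype G]

theorem sum_sum_cosetSignExtension_prod_four_of_mem {c : G} (hc : c ∈ H) :
    ∑ x, ∑ ε : G ⧸ H → ℤˣ, ((hT.cosetSignExtension φ ε 1 * hT.cosetSignExtension φ ε c *
      hT.cosetSignExtension φ ε x * hT.cosetSignExtension φ ε (x * c) : ℤˣ) : ℤ) =
      Fintype.card (G ⧸ H → ℤˣ) * Fintype.card G := by
  simp only [prod_four_eq_one_of_equivariant_of_mem φ (hT.cosetSignExtension_mul φ _) hc,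
    Units.val_one, sum_const, card_univ, nsmul_eq_mul, mul_one]
  ring

theorem sum_sum_cosetSignExtension_prod_four_nonneg {c : G} (hc : c ∉ H) (hc2 : c ^ 2 = 1) :
    0 ≤ ∑ x, ∑ ε : G ⧸ H → ℤˣ, ((hT.cosetSignExtension φ ε 1 * hT.cosetSignExtension φ ε c *
      hT.cosetSignExtension φ ε x * hT.cosetSignExtension φ ε (x * c) : ℤˣ) : ℤ) := by
  have hcc : c * c = 1 := by rwa [← pow_two]
  have hinv : c⁻¹ = c := inv_eq_of_mul_eq_one_right hcc
  have hswap : ∑ x, φ.extendByZero (c⁻¹ * x) * φ.extendByZero (x * c) =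
      ∑ x, φ.extendByZero x * φ.extendByZero (c⁻¹ * x * c) :=
    Fintype.sum_equiv (Equiv.mulLeft c⁻¹) _ _ fun x => by simp [hinv, ← mul_assoc, hcc]
  simp only [hT.sum_cosetSignExtension_prod_four φ hc, ← mul_sum, sum_add_distrib, hswap]
  exact mul_nonneg (Nat.cast_nonneg _)
    (add_nonneg (φ.sum_extendByZero_mul_conj_nonneg c) (φ.sum_extendByZero_mul_conj_nonneg c))

theorem card_mul_card_le_sum_cosetSignExtension_mul_multCorrelation (hT2 : ∀ c ∈ T, c ^ 2 = 1) :
    (Fintype.card (G ⧸ H → ℤˣ) : ℤ) * (Nat.card H * Nat.card G) ≤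
      ∑ ε, (hT.cosetSignExtension φ ε 1 : ℤ) * multCorrelation (hT.cosetSignExtension φ ε) := by
  classical
  set v := hT.cosetSignExtension φ
  set N : ℤ := (Fintype.card (G ⧸ H → ℤˣ) : ℤ)
  have hmem : ∀ y, ((hT.equiv y).1 : G) ∈ H ↔ y ∈ H := fun y => by
    conv_rhs => rw [← hT.equiv_fst_mul_equiv_snd y]
    exact (H.mul_mem_cancel_right (hT.equiv y).2.2).symm
  calc N * (Nat.card H * Nat.card G) = ∑ y, if y ∈ H then N * Fintype.card G else 0 := by
        rw [sum_ite, sum_const_zero, add_zero, sum_const, nsmul_eq_mul, Nat.card_eq_fintype_card,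
          Nat.card_eq_fintype_card, Fintype.card_subtype]
        ring
    _ ≤ ∑ y, ∑ x, ∑ ε,
          ((v ε 1 * v ε (hT.equiv y).1 * v ε x * v ε (x * (hT.equiv y).1) : ℤˣ) : ℤ) :=
        sum_le_sum fun y _ => by
          split_ifs with hy
          · rw [hT.sum_sum_cosetSignExtension_prod_four_of_mem φ ((hmem y).2 hy)]
          · exact hT.sum_sum_cosetSignExtension_prod_four_nonneg φ (mt (hmem y).1 hy)
              (hT2 _ (hT.equiv y).1.2)
    _ = ∑ ε, ∑ y, ∑ x,
          ((v ε 1 * v ε (hT.equiv y).1 * v ε x * v ε (x * (hT.equiv y).1) : ℤˣ) : ℤ) :=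
        (sum_congr rfl fun y _ => sum_comm).trans sum_comm
    _ = ∑ ε, (v ε 1 : ℤ) * multCorrelation (v ε) := sum_congr rfl fun ε _ => by
        rw [multCorrelation, mul_sum, Fintype.sum_prod_type_right]
        refine sum_congr rfl fun y _ => sum_congr rfl fun x _ => ?_
        dsimp only
        rw [apply_mul_mul_eq_of_equivariant φ hT (hT.cosetSignExtension_mul φ ε), ← Units.val_mul]
        congr 1
        simp only [v]
        ac_rfl

end Average

end Subgroup.IsComplement

theorem Subgroup.IsComplement.exists_equivariant_card_mul_card_le_multCorrelation {G : Type*}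
    [Group G] [Fintype G] {H : Subgroup G} {T : Set G} (hT : IsComplement T H) (φ : H →* ℤˣ)
    (hT2 : ∀ c ∈ T, c ^ 2 = 1) : ∃ u : G → ℤˣ, (∀ g (k : H), u (g * k) = u g * φ k) ∧
      (Nat.card H * Nat.card G : ℤ) ≤ multCorrelation u := by
  classical
  obtain ⟨ε, -, hε⟩ := exists_le_of_sum_le (f := fun _ => (Nat.card H * Nat.card G : ℤ))
    univ_nonempty (by
      simpa only [sum_const, card_univ, nsmul_eq_mul] using
        hT.card_mul_card_le_sum_cosetSignExtension_mul_multCorrelation φ hT2)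
  refine ⟨fun g => hT.cosetSignExtension φ ε 1 * hT.cosetSignExtension φ ε g, fun g k => ?_, ?_⟩
  · dsimp only
    rw [cosetSignExtension_mul, mul_assoc]
  · rwa [multCorrelation_const_mul]

theorem Subgroup.isComplement_of_existsUnique_mem_leftCoset {G : Type*} [Group G]
    {H : Subgroup G} {T : Set G} (hT : ∀ g : G, ∃! c, c ∈ T ∧ g⁻¹ * c ∈ H) :
    IsComplement T H := by
  refine isComplement_iff_existsUnique_inv_mul_mem.2 fun g => ?_
  have hiff : ∀ c : G, c⁻¹ * g ∈ H ↔ g⁻¹ * c ∈ H := fun c => by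
    rw [← H.inv_mem_iff, mul_inv_rev, inv_inv]
  obtain ⟨c, ⟨hcT, hc⟩, huniq⟩ := hT g
  exact ⟨⟨c, hcT⟩, (hiff c).2 hc, fun d hd => Subtype.ext (huniq d ⟨d.2, (hiff d).1 hd⟩)⟩

theorem parity_lower_bound_involutive_transversal {G : Type} [Group G] [Fintype G]
    (H : Subgroup G) (φ : H →* ℤˣ) (hφ : Function.Surjective φ)
    (T : Set G) (hT : ∀ g : G, ∃! c, c ∈ T ∧ g⁻¹ * c ∈ H)
    (hTinv : ∀ c ∈ T, c ^ 2 = 1) :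
    ∃ f : G → ℝ, (∀ x, f x = 1 ∨ f x = -1) ∧ (∑ x : G, f x = 0) ∧
      (1 / 2 : ℝ) * (1 + (Nat.card H : ℝ) / (Nat.card G : ℝ)) * (Nat.card G : ℝ) ^ 2 ≤
        (Nat.card {p : G × G // f (p.1 * p.2) = f p.1 * f p.2} : ℝ) := by
  obtain ⟨u, hu, hbound⟩ := (Subgroup.isComplement_of_existsUnique_mem_leftCoset hT
    ).exists_equivariant_card_mul_card_le_multCorrelation φ hTinv
  obtain ⟨k, hk⟩ := hφ (-1)
  refine ⟨fun x => ((u x : ℤ) : ℝ), fun x => ?_, ?_, ?_⟩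
  · rcases Int.units_eq_one_or (u x) with h | h <;> simp [h]
  · exact sum_eq_zero_of_mul_right_eq_neg _ k fun g => by simp [hu, hk]
  have hcard : Nat.card {p : G × G // ((u (p.1 * p.2) : ℤ) : ℝ) = (u p.1 : ℤ) * (u p.2 : ℤ)} =
      Nat.card {p : G × G // u (p.1 * p.2) = u p.1 * u p.2} :=
    Nat.card_congr (Equiv.subtypeEquivRight fun p => by norm_cast)
  have hcount : (2 * Nat.card {p : G × G // u (p.1 * p.2) = u p.1 * u p.2} : ℝ) =
      Nat.card G ^ 2 + multCorrelation u := by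
    exact_mod_cast two_mul_card_eq_card_sq_add_multCorrelation u
  have hbound' : (Nat.card H * Nat.card G : ℝ) ≤ multCorrelation u := by exact_mod_cast hbound
  have hG : (0 : ℝ) < Nat.card G := Nat.cast_pos.2 Nat.card_pos
  rw [hcard, show (1 / 2 : ℝ) * (1 + (Nat.card H : ℝ) / (Nat.card G : ℝ)) * (Nat.card G : ℝ) ^ 2 =
    (Nat.card G ^ 2 + Nat.card H * Nat.card G) / 2 by field_simp]
  linarith
end

section
/- Let G be a finite group with a subgroup H admitting a surjective group homomorphism φ : H → {−1, 1}. Suppose there exists a left transversal T of H in G such that for every c ∈ T with H ∩ cHc ≠ ∅ (where cHc = {chc : h ∈ H}), one has c² ∈ H and φ(c²) = 1. Then there exists a function f : G → {−1, 1} with Σ_{x∈G} f(x) = 0 such that the number of pairs (x, y) ∈ G × G with f(x·y) = f(x)·f(y) is at least (1/2)·(1 + |H|/|G|)·|G|². -/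
/-!
For signs `ε` on the left cosets of `H`, put `f_ε(x) = ε(xH) · φ(s(xH)⁻¹ x)`, where `s` picks the
representatives in `T` (and `1` for `H` itself, whose sign is fixed to `1`). Since
`f_ε(xk) = f_ε(x) φ(k)` for `k ∈ H` and `φ` is onto `{±1}`, `∑ f_ε = 0`; and every pair with `y ∈ H`
satisfies `f_ε(xy) = f_ε(x) f_ε(y)`, contributing `|G| |H|` to the correlation
`∑ f_ε(xy) f_ε(x) f_ε(y)`. For `y ∉ H`, averaging over all `ε` kills every term whose cosets do
not pair up, leaving `φ(x) φ(y⁻¹xy) + φ(xy) φ(x⁻¹y)` (with `φ` extended by zero). Summed over `x`,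
both are sums of a `±1`-character of a subgroup `H ∩ g⁻¹Hg`, hence nonnegative; for the second one
this needs `φ(c²) = 1` for the representative `c` of `yH`. So some `ε` has correlation at least
`|G| |H|`, and the pairs with `f(xy) = f(x) f(y)` number half of `|G|²` plus the correlation.
-/

open Finset

lemma Fintype.sum_eq_zero_of_comp_equiv_eq_neg {α : Type*} [Fintype α] (e : α ≃ α) {F : α → ℝ}
    (h : ∀ a, F (e a) = -F a) : ∑ a, F a = 0 := by
  have := e.sum_comp F
  simp only [h, sum_neg_distrib] at this
  linarith

noncomputable def mulCorrelation {M : Type*} [Mul M] [Fintype M] (f : M → ℝ) : ℝ :=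
  ∑ p : M × M, f (p.1 * p.2) * f p.1 * f p.2

lemma two_mul_card_eq_card_sq_add_mulCorrelation {M : Type*} [Mul M] [Fintype M] {f : M → ℝ}
    (hf : ∀ x, f x = 1 ∨ f x = -1) :
    2 * (Nat.card {p : M × M // f (p.1 * p.2) = f p.1 * f p.2} : ℝ) =
      Nat.card M ^ 2 + mulCorrelation f := by
  classical
  have hterm (p : M × M) :
      2 * (if f (p.1 * p.2) = f p.1 * f p.2 then 1 else 0 : ℝ) =
        1 + f (p.1 * p.2) * f p.1 * f p.2 := by
    rcases hf (p.1 * p.2) with h | h <;> rcases hf p.1 with h1 | h1 <;>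
      rcases hf p.2 with h2 | h2 <;> norm_num [h, h1, h2]
  rw [Nat.card_eq_fintype_card, Fintype.card_subtype, card_filter, Nat.cast_sum, mul_sum,
    Nat.card_eq_fintype_card, mulCorrelation]
  push_cast
  simp_rw [hterm, sum_add_distrib, sum_const, card_univ, Fintype.card_prod]
  simp [sq]

variable {G : Type*} [Group G] {H : Subgroup G} [DecidablePred (· ∈ H)]

section zeroExt

variable (φ : H →* ℤˣ)

noncomputable def zeroExt (x : G) : ℝ := if hx : x ∈ H then ((φ ⟨x, hx⟩ : ℤ) : ℝ) else 0

variable {φ}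

lemma zeroExt_of_mem {x : G} (hx : x ∈ H) : zeroExt φ x = ((φ ⟨x, hx⟩ : ℤ) : ℝ) := dif_pos hx

lemma zeroExt_of_notMem {x : G} (hx : x ∉ H) : zeroExt φ x = 0 := dif_neg hx

lemma zeroExt_mul_self {x : G} (hx : x ∈ H) : zeroExt φ x * zeroExt φ x = 1 := by
  rw [zeroExt_of_mem hx, ← Int.cast_mul, ← Units.val_mul, Int.units_mul_self]
  simp

lemma zeroExt_mul_of_mem_right {b : G} (hb : b ∈ H) (a : G) :
    zeroExt φ (a * b) = zeroExt φ a * zeroExt φ b := by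
  by_cases ha : a ∈ H
  · rw [zeroExt_of_mem (H.mul_mem ha hb), zeroExt_of_mem ha, zeroExt_of_mem hb,
      ← Int.cast_mul, ← Units.val_mul, ← map_mul]
    rfl
  · rw [zeroExt_of_notMem ha, zeroExt_of_notMem (mt (H.mul_mem_cancel_right hb).mp ha), zero_mul]

lemma zeroExt_mul_of_mem_left {a : G} (ha : a ∈ H) (b : G) :
    zeroExt φ (a * b) = zeroExt φ a * zeroExt φ b := by
  by_cases hb : b ∈ H
  · exact zeroExt_mul_of_mem_right hb a
  · rw [zeroExt_of_notMem hb, zeroExt_of_notMem (mt (H.mul_mem_cancel_left ha).mp hb), mul_zero]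

lemma zeroExt_one : zeroExt φ 1 = 1 := by
  rw [zeroExt_of_mem H.one_mem]
  change ((φ 1 : ℤ) : ℝ) = 1
  simp

lemma zeroExt_inv (x : G) : zeroExt φ x⁻¹ = zeroExt φ x := by
  by_cases hx : x ∈ H
  · have h := zeroExt_mul_of_mem_left (φ := φ) hx x⁻¹
    rw [mul_inv_cancel, zeroExt_one] at h
    have hsq := zeroExt_mul_self (φ := φ) hx
    linear_combination (-zeroExt φ x⁻¹) * hsq - zeroExt φ x * h
  · rw [zeroExt_of_notMem hx, zeroExt_of_notMem (mt H.inv_mem_iff.mp hx)]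

lemma sum_zeroExt_mul_zeroExt_conj_nonneg [Fintype G] (g : G) :
    0 ≤ ∑ x, zeroExt φ x * zeroExt φ (g * x * g⁻¹) := by
  classical
  let K := H ⊓ H.comap (MulAut.conj g).toMonoidHom
  have mem_K {x : G} : x ∈ K ↔ x ∈ H ∧ g * x * g⁻¹ ∈ H := by simp [K]
  let ψ : K →* ℝ :=
    { toFun k := zeroExt φ k * zeroExt φ (g * k * g⁻¹)
      map_one' := by
        simp [zeroExt_one]
      map_mul' a b := by
        have ha := mem_K.mp a.2
        have hb := mem_K.mp b.2
        simp only [Subgroup.coe_mul]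
        rw [show g * (a * b) * g⁻¹ = (g * a * g⁻¹) * (g * b * g⁻¹) by group,
          zeroExt_mul_of_mem_right hb.1, zeroExt_mul_of_mem_right hb.2]
        ring }
  have hsum : ∑ x, zeroExt φ x * zeroExt φ (g * x * g⁻¹) = ∑ k : K, ψ k := by
    rw [← sum_filter_of_ne (p := (· ∈ K)), sum_subtype (p := (· ∈ K)) _ (by simp)]
    · rfl
    intro x _ hx
    by_contra hxK
    rcases not_and_or.mp (mt mem_K.mpr hxK) with h | h <;> simp [zeroExt_of_notMem h] at hx
  rw [hsum, sum_hom_units]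
  split_ifs <;> simp

variable (φ) in
lemma sum_zeroExt_mul_zeroExt_inv_mul [Fintype G] {c y : G} (hcy : c⁻¹ * y ∈ H) :
    ∑ x, zeroExt φ (x * y) * zeroExt φ (x⁻¹ * y) = ∑ m, zeroExt φ (c * m * c) * zeroExt φ m := by
  rw [← Equiv.sum_comp (Equiv.mulLeft c)]
  refine sum_congr rfl fun m _ => ?_
  have hy : y = c * (c⁻¹ * y) := (mul_inv_cancel_left c y).symm
  rw [Equiv.coe_mulLeft, hy, show c * m * (c * (c⁻¹ * y)) = c * m * c * (c⁻¹ * y) by group,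
    show (c * m)⁻¹ * (c * (c⁻¹ * y)) = m⁻¹ * (c⁻¹ * y) by group,
    zeroExt_mul_of_mem_right hcy, zeroExt_mul_of_mem_right hcy, zeroExt_inv]
  linear_combination zeroExt φ (c * m * c) * zeroExt φ m * zeroExt_mul_self hcy

lemma sum_zeroExt_mul_mul_nonneg [Fintype G] {c : G}
    (hc : (∃ h : H, c * h * c ∈ H) → ∃ hc2 : c * c ∈ H, φ ⟨c * c, hc2⟩ = 1) :
    0 ≤ ∑ m, zeroExt φ (c * m * c) * zeroExt φ m := by
  by_cases hmeets : ∃ h : H, c * h * c ∈ H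
  · obtain ⟨hc2, hφc2⟩ := hc hmeets
    have hsq : zeroExt φ (c * c) = 1 := by simp [zeroExt_of_mem hc2, hφc2]
    have hterm (m : G) : zeroExt φ (c * m * c) = zeroExt φ (c * m * c⁻¹) := by
      rw [show c * m * c = c * m * c⁻¹ * (c * c) by group, zeroExt_mul_of_mem_right hc2, hsq,
        mul_one]
    simp_rw [hterm, mul_comm (zeroExt φ (c * _ * c⁻¹))]
    exact sum_zeroExt_mul_zeroExt_conj_nonneg c
  · refine (sum_eq_zero fun m _ => ?_).ge
    by_cases hm : m ∈ H
    · rw [zeroExt_of_notMem fun h => hmeets ⟨⟨m, hm⟩, h⟩, zero_mul]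
    · rw [zeroExt_of_notMem hm, mul_zero]

end zeroExt

section cosetSign

def cosetSign (ε : G ⧸ H → ℤˣ) (x : G) : ℝ := if x ∈ H then 1 else ((ε x : ℤ) : ℝ)

lemma cosetSign_of_mem (ε : G ⧸ H → ℤˣ) {x : G} (hx : x ∈ H) : cosetSign ε x = 1 := if_pos hx

lemma cosetSign_of_notMem (ε : G ⧸ H → ℤˣ) {x : G} (hx : x ∉ H) :
    cosetSign ε x = ((ε x : ℤ) : ℝ) := if_neg hx

lemma cosetSign_mul (ε δ : G ⧸ H → ℤˣ) (x : G) :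
    cosetSign (ε * δ) x = cosetSign ε x * cosetSign δ x := by
  unfold cosetSign
  split_ifs <;> simp

lemma cosetSign_mul_self (ε : G ⧸ H → ℤˣ) (x : G) : cosetSign ε x * cosetSign ε x = 1 := by
  rw [← cosetSign_mul]
  simp [cosetSign, Int.units_mul_self]

lemma cosetSign_mul_of_mem (ε : G ⧸ H → ℤˣ) {k : G} (hk : k ∈ H) (x : G) :
    cosetSign ε (x * k) = cosetSign ε x := by
  simp only [cosetSign, H.mul_mem_cancel_right hk, QuotientGroup.mk_mul_of_mem x hk]

end cosetSign

section twistedExt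

variable (φ : H →* ℤˣ) (s : G ⧸ H → G)

noncomputable def sectionExt (x : G) : ℝ := zeroExt φ ((s x)⁻¹ * x)

noncomputable def twistedExt (ε : G ⧸ H → ℤˣ) (x : G) : ℝ := cosetSign ε x * sectionExt φ s x

variable {φ s}

lemma sectionExt_mul_self (hs : ∀ q, (s q : G ⧸ H) = q) (x : G) :
    sectionExt φ s x * sectionExt φ s x = 1 :=
  zeroExt_mul_self (QuotientGroup.eq.mp (hs x))

lemma sectionExt_of_mem (hs₁ : ∀ k ∈ H, s k = 1) {k : G} (hk : k ∈ H) :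
    sectionExt φ s k = zeroExt φ k := by
  rw [sectionExt, hs₁ k hk, inv_one, one_mul]

lemma sectionExt_mul_of_mem {k : G} (hk : k ∈ H) (x : G) :
    sectionExt φ s (x * k) = sectionExt φ s x * zeroExt φ k := by
  rw [sectionExt, sectionExt, QuotientGroup.mk_mul_of_mem x hk, ← mul_assoc,
    zeroExt_mul_of_mem_right hk]

lemma twistedExt_mul_self (hs : ∀ q, (s q : G ⧸ H) = q) (ε : G ⧸ H → ℤˣ) (x : G) :
    twistedExt φ s ε x * twistedExt φ s ε x = 1 := by
  rw [twistedExt, mul_mul_mul_comm, cosetSign_mul_self, sectionExt_mul_self hs, one_mul]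

lemma twistedExt_of_mem (hs₁ : ∀ k ∈ H, s k = 1) (ε : G ⧸ H → ℤˣ) {k : G} (hk : k ∈ H) :
    twistedExt φ s ε k = zeroExt φ k := by
  rw [twistedExt, cosetSign_of_mem ε hk, sectionExt_of_mem hs₁ hk, one_mul]

lemma twistedExt_mul_of_mem (ε : G ⧸ H → ℤˣ) {k : G} (hk : k ∈ H) (x : G) :
    twistedExt φ s ε (x * k) = twistedExt φ s ε x * zeroExt φ k := by
  rw [twistedExt, twistedExt, cosetSign_mul_of_mem ε hk, sectionExt_mul_of_mem hk, mul_assoc]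

lemma twistedExt_mul_right (ε δ : G ⧸ H → ℤˣ) (x : G) :
    twistedExt φ s (ε * δ) x = cosetSign δ x * twistedExt φ s ε x := by
  rw [twistedExt, twistedExt, cosetSign_mul]
  ring

lemma sum_twistedExt_eq_zero [Fintype G] {h₀ : H} (hh₀ : φ h₀ = -1) (ε : G ⧸ H → ℤˣ) :
    ∑ x, twistedExt φ s ε x = 0 := by
  refine Fintype.sum_eq_zero_of_comp_equiv_eq_neg (Equiv.mulRight (h₀ : G)) fun x => ?_
  rw [Equiv.coe_mulRight, twistedExt_mul_of_mem ε h₀.2, zeroExt_of_mem h₀.2, Subtype.coe_eta, hh₀]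
  simp

end twistedExt

section average

variable [Fintype G] {φ : H →* ℤˣ} {s : G ⧸ H → G}

lemma sum_twistedExt_mul_eq_zero {a b : G} (ha : a ∉ H) (hab : a⁻¹ * b ∉ H) :
    ∑ ε, twistedExt φ s ε a * twistedExt φ s ε b = 0 := by
  refine Fintype.sum_eq_zero_of_comp_equiv_eq_neg
    (Equiv.mulRight (Pi.mulSingle (a : G ⧸ H) (-1))) fun ε => ?_
  have hb : cosetSign (Pi.mulSingle (a : G ⧸ H) (-1)) b = 1 := by
    by_cases hbH : b ∈ H
    · exact cosetSign_of_mem _ hbH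
    · rw [cosetSign_of_notMem _ hbH,
        Pi.mulSingle_eq_of_ne (fun h => hab (QuotientGroup.eq.mp h.symm))]
      simp
  rw [Equiv.coe_mulRight, twistedExt_mul_right, twistedExt_mul_right, hb,
    cosetSign_of_notMem _ ha, Pi.mulSingle_eq_same]
  simp

lemma sum_twistedExt_mul (hs : ∀ q, (s q : G ⧸ H) = q) (a b : G) :
    ∑ ε, twistedExt φ s ε a * twistedExt φ s ε b =
      Fintype.card (G ⧸ H → ℤˣ) * zeroExt φ (a⁻¹ * b) := by
  by_cases hab : a⁻¹ * b ∈ H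
  · have hterm (ε : G ⧸ H → ℤˣ) :
        twistedExt φ s ε a * twistedExt φ s ε b = zeroExt φ (a⁻¹ * b) := by
      conv_lhs => rw [← mul_inv_cancel_left a b]
      rw [twistedExt_mul_of_mem _ hab, ← mul_assoc, twistedExt_mul_self hs, one_mul]
    simp only [hterm, sum_const, card_univ, nsmul_eq_mul]
  rw [zeroExt_of_notMem hab, mul_zero]
  by_cases ha : a ∈ H
  · have hb : b ∉ H := fun hb => hab (H.mul_mem (H.inv_mem ha) hb)
    simp_rw [mul_comm (twistedExt φ s _ a)]
    exact sum_twistedExt_mul_eq_zero hb (by simpa [← H.inv_mem_iff (x := b⁻¹ * a)] using hab)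
  · exact sum_twistedExt_mul_eq_zero ha hab

lemma sum_twistedExt_mul_mul_eq_zero {a b c : G} (ha : a ∉ H) (hb : b ∉ H) (hc : c ∉ H) :
    ∑ ε, twistedExt φ s ε a * twistedExt φ s ε b * twistedExt φ s ε c = 0 := by
  refine Fintype.sum_eq_zero_of_comp_equiv_eq_neg (Equiv.mulRight (-1)) fun ε => ?_
  simp only [Equiv.coe_mulRight, twistedExt_mul_right, cosetSign_of_notMem _ ha,
    cosetSign_of_notMem _ hb, cosetSign_of_notMem _ hc]
  simp

lemma sum_twistedExt_mul_mul_of_notMem (hs : ∀ q, (s q : G ⧸ H) = q) (hs₁ : ∀ k ∈ H, s k = 1)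
    {y : G} (hy : y ∉ H) (x : G) :
    ∑ ε, twistedExt φ s ε (x * y) * twistedExt φ s ε x * twistedExt φ s ε y =
      Fintype.card (G ⧸ H → ℤˣ) * (zeroExt φ x * zeroExt φ (y⁻¹ * x * y) +
        zeroExt φ (x * y) * zeroExt φ (x⁻¹ * y)) := by
  by_cases hx : x ∈ H
  · have hxy : x * y ∉ H := mt (H.mul_mem_cancel_left hx).mp hy
    simp_rw [twistedExt_of_mem hs₁ _ hx, mul_right_comm _ (zeroExt φ x), ← sum_mul,
      sum_twistedExt_mul hs, zeroExt_of_notMem hxy,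
      show (x * y)⁻¹ * y = (y⁻¹ * x * y)⁻¹ by group, zeroExt_inv]
    ring
  rw [zeroExt_of_notMem hx]
  by_cases hxy : x * y ∈ H
  · simp_rw [twistedExt_of_mem hs₁ _ hxy, mul_assoc, ← mul_sum, sum_twistedExt_mul hs]
    ring
  · rw [sum_twistedExt_mul_mul_eq_zero hxy hx hy, zeroExt_of_notMem hxy]
    ring

lemma le_sum_sum_twistedExt (hs : ∀ q, (s q : G ⧸ H) = q) (hs₁ : ∀ k ∈ H, s k = 1)
    (hsq : ∀ x ∉ H, (∃ h : H, s x * h * s x ∈ H) → ∃ hc2 : s x * s x ∈ H, φ ⟨_, hc2⟩ = 1)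
    (y : G) :
    (if y ∈ H then (Fintype.card (G ⧸ H → ℤˣ) : ℝ) * Fintype.card G else 0) ≤
      ∑ x, ∑ ε, twistedExt φ s ε (x * y) * twistedExt φ s ε x * twistedExt φ s ε y := by
  by_cases hy : y ∈ H
  · have hterm (ε : G ⧸ H → ℤˣ) (x : G) :
        twistedExt φ s ε (x * y) * twistedExt φ s ε x * twistedExt φ s ε y = 1 := by
      rw [twistedExt_mul_of_mem ε hy, twistedExt_of_mem hs₁ ε hy, mul_right_comm _ (zeroExt φ y),
        mul_assoc, zeroExt_mul_self hy, twistedExt_mul_self hs, one_mul]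
    simp only [hterm, if_pos hy, sum_const, card_univ, nsmul_eq_mul, mul_one]
    rw [mul_comm]
  · rw [if_neg hy]
    simp_rw [sum_twistedExt_mul_mul_of_notMem hs hs₁ hy, ← mul_sum, sum_add_distrib]
    have hconj : 0 ≤ ∑ x, zeroExt φ x * zeroExt φ (y⁻¹ * x * y) := by
      simpa using sum_zeroExt_mul_zeroExt_conj_nonneg (φ := φ) y⁻¹
    rw [sum_zeroExt_mul_zeroExt_inv_mul φ (QuotientGroup.eq.mp (hs y))]
    have := sum_zeroExt_mul_mul_nonneg (hsq y hy)
    positivity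

lemma exists_le_mulCorrelation_twistedExt
    (hs : ∀ q, (s q : G ⧸ H) = q) (hs₁ : ∀ k ∈ H, s k = 1)
    (hsq : ∀ x ∉ H, (∃ h : H, s x * h * s x ∈ H) → ∃ hc2 : s x * s x ∈ H, φ ⟨_, hc2⟩ = 1) :
    ∃ ε, (Nat.card G : ℝ) * Nat.card H ≤ mulCorrelation (twistedExt φ s ε) := by
  have hsum : ∑ _ε : G ⧸ H → ℤˣ, (Nat.card G : ℝ) * Nat.card H ≤
      ∑ ε, mulCorrelation (twistedExt φ s ε) :=
    calc ∑ _ε : G ⧸ H → ℤˣ, (Nat.card G : ℝ) * Nat.card H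
        = ∑ y, if y ∈ H then (Fintype.card (G ⧸ H → ℤˣ) : ℝ) * Fintype.card G else 0 := by
          rw [sum_ite, sum_const_zero, add_zero, sum_const, sum_const, card_univ,
            Nat.card_eq_fintype_card, Nat.card_eq_fintype_card, Fintype.card_subtype]
          simp only [nsmul_eq_mul]
          ring
      _ ≤ ∑ y, ∑ x, ∑ ε, twistedExt φ s ε (x * y) * twistedExt φ s ε x * twistedExt φ s ε y :=
          sum_le_sum fun y _ => le_sum_sum_twistedExt hs hs₁ hsq y
      _ = ∑ ε, mulCorrelation (twistedExt φ s ε) := by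
          simp only [mulCorrelation, Fintype.sum_prod_type_right]
          conv_rhs => rw [Finset.sum_comm]
          exact sum_congr rfl fun y _ => Finset.sum_comm
  obtain ⟨ε, -, hε⟩ := exists_le_of_sum_le (f := fun _ => (Nat.card G : ℝ) * Nat.card H)
    univ_nonempty hsum
  exact ⟨ε, hε⟩

end average

lemma exists_section_of_forall_exists_inv_mul_mem {T : Set G}
    (hT : ∀ g : G, ∃ c ∈ T, g⁻¹ * c ∈ H) :
    ∃ s : G ⧸ H → G, (∀ q, (s q : G ⧸ H) = q) ∧ (∀ k ∈ H, s k = 1) ∧ ∀ x ∉ H, s x ∈ T := by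
  classical
  have hrep (q : G ⧸ H) : ∃ c ∈ T, (c : G ⧸ H) = q := by
    induction q using QuotientGroup.induction_on with
    | H g =>
      obtain ⟨c, hc, hgc⟩ := hT g
      exact ⟨c, hc, (QuotientGroup.eq.mpr hgc).symm⟩
  choose t htT ht using hrep
  have hone {x : G} : (x : G ⧸ H) = ((1 : G) : G ⧸ H) ↔ x ∈ H := by
    rw [eq_comm, QuotientGroup.eq, inv_one, one_mul]
  refine ⟨fun q => if q = ((1 : G) : G ⧸ H) then 1 else t q, fun q => ?_, fun k hk => ?_,
    fun x hx => ?_⟩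
  · by_cases hq : q = ((1 : G) : G ⧸ H) <;> simp [hq, ht]
  · simp [hone.mpr hk]
  · simp [mt hone.mp hx, htT]

theorem parity_lower_bound_weak_transversal {G : Type} [Group G] [Fintype G]
    (H : Subgroup G) (φ : H →* ℤˣ) (hφ : Function.Surjective φ)
    (T : Set G) (hT : ∀ g : G, ∃! c, c ∈ T ∧ g⁻¹ * c ∈ H)
    (hTsq : ∀ c ∈ T, (∃ h : H, c * (h : G) * c ∈ H) →
      ∃ hc2 : c * c ∈ H, φ ⟨c * c, hc2⟩ = 1) :
    ∃ f : G → ℝ, (∀ x, f x = 1 ∨ f x = -1) ∧ (∑ x : G, f x = 0) ∧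
      (1 / 2 : ℝ) * (1 + (Nat.card H : ℝ) / (Nat.card G : ℝ)) * (Nat.card G : ℝ) ^ 2 ≤
        (Nat.card {p : G × G // f (p.1 * p.2) = f p.1 * f p.2} : ℝ) := by
  classical
  obtain ⟨s, hs, hs₁, hsT⟩ :=
    exists_section_of_forall_exists_inv_mul_mem fun g => by simpa using (hT g).exists
  obtain ⟨ε, hε⟩ :=
    exists_le_mulCorrelation_twistedExt (φ := φ) hs hs₁ fun x hx => hTsq _ (hsT x hx)
  obtain ⟨h₀, hh₀⟩ := hφ (-1)
  have hpm (x : G) := mul_self_eq_one_iff.mp (twistedExt_mul_self (φ := φ) hs ε x)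
  refine ⟨twistedExt φ s ε, hpm, sum_twistedExt_eq_zero hh₀ ε, ?_⟩
  have hcount := two_mul_card_eq_card_sq_add_mulCorrelation hpm
  have hG : (0 : ℝ) < Nat.card G := by exact_mod_cast Nat.card_pos
  rw [show (1 / 2 : ℝ) * (1 + Nat.card H / Nat.card G) * Nat.card G ^ 2 =
      (Nat.card G ^ 2 + Nat.card G * Nat.card H) / 2 by field_simp]
  linarith
end

section
/- Let G be a group, H ≤ G a finite subgroup, and c ∈ G with c ∉ N_G(H) (i.e., cHc⁻¹ ≠ H). Then |H ∩ cHc| ≤ |H|/2, where cHc = {c·h·c : h ∈ H}. -/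
/-!
If `x = c b c` and `y = c a c` both lie in `H`, then `y x⁻¹ = c (a b⁻¹) c⁻¹` lies in
`K = H ∩ cHc⁻¹`, so `H ∩ cHc` is contained in one right coset of `K`. As `H` is finite and `c`
does not normalize it, `K` is a proper subgroup of `H`, hence has index at least `2` in `H`.
-/

namespace Subgroup

variable {G : Type*} [Group G]

theorem two_mul_card_le_of_lt {K H : Subgroup G} [Finite H] (h : K < H) :
    2 * Nat.card K ≤ Nat.card H := by
  rw [← relIndex_bot_left, ← relIndex_bot_left, ← relIndex_mul_relIndex ⊥ K H bot_le h.le,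
    mul_comm]
  have h₁ : K.relIndex H ≠ 1 := relIndex_eq_one.not.2 h.not_ge
  have h₀ : K.relIndex H ≠ 0 := (K.subgroupOf H).index_ne_zero_of_finite
  gcongr
  omega

theorem not_le_map_conj_of_notMem_normalizer (H : Subgroup G) [Finite H] {c : G}
    (hc : c ∉ normalizer (H : Set G)) : ¬ H ≤ H.map (MulAut.conj c).toMonoidHom := by
  intro hle
  refine hc (inv_mem_iff.1 (mem_normalizer_fintype fun h hh => ?_))
  obtain ⟨a, ha, rfl⟩ := mem_map.1 (hle hh)
  simpa [mul_assoc] using ha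

theorem inter_image_subset_image_mul_right (H : Subgroup G) (c : G) {x : G}
    (hx : x ∈ (H : Set G) ∩ (fun h => c * h * c) '' H) :
    (H : Set G) ∩ (fun h => c * h * c) '' H ⊆
      (· * x) '' (H ⊓ H.map (MulAut.conj c).toMonoidHom : Subgroup G) := by
  obtain ⟨hxH, b, hb, rfl⟩ := hx
  rintro _ ⟨hs, a, ha, rfl⟩
  refine ⟨_, mem_inf.2 ⟨mul_mem hs (inv_mem hxH),
    mem_map.2 ⟨a * b⁻¹, mul_mem ha (inv_mem hb), ?_⟩⟩, inv_mul_cancel_right _ (c * b * c)⟩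
  simp only [MulEquiv.coe_toMonoidHom, MulAut.conj_apply]
  group

theorem ncard_inter_image_le (H : Subgroup G) [Finite H] (c : G) :
    ((H : Set G) ∩ (fun h => c * h * c) '' H).ncard ≤
      Nat.card (H ⊓ H.map (MulAut.conj c).toMonoidHom : Subgroup G) := by
  rcases Set.eq_empty_or_nonempty ((H : Set G) ∩ (fun h => c * h * c) '' H) with hS | ⟨x, hx⟩
  · simp [hS]
  have : Finite (H ⊓ H.map (MulAut.conj c).toMonoidHom : Subgroup G) :=
    Finite.of_injective _ (inclusion_injective inf_le_left)
  calc _ ≤ ((· * x) '' (H ⊓ H.map (MulAut.conj c).toMonoidHom : Subgroup G) : Set G).ncard :=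
        Set.ncard_le_ncard (inter_image_subset_image_mul_right H c hx) (Set.toFinite _)
    _ = _ := (Set.ncard_image_of_injective _ (mul_left_injective x)).trans
        (Nat.card_coe_set_eq _).symm

end Subgroup

theorem card_inter_cHc_le_half {G : Type} [Group G] (H : Subgroup G)
    (hH : Finite H) (c : G) (hc : c ∉ Subgroup.normalizer (H : Set G)) :
    2 * ((H : Set G) ∩ (fun h => c * h * c) '' (H : Set G)).ncard ≤ Nat.card H :=
  calc _ ≤ 2 * Nat.card (H ⊓ H.map (MulAut.conj c).toMonoidHom : Subgroup G) := by
        gcongr; exact H.ncard_inter_image_le c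
    _ ≤ Nat.card H := Subgroup.two_mul_card_le_of_lt <|
        inf_lt_left.2 (H.not_le_map_conj_of_notMem_normalizer hc)
end

section
/- Let G be a group, H ≤ G a finite subgroup, and c ∈ G such that H ∩ cHc ≠ ∅, where cHc = {c·h·c : h ∈ H}. Then |H ∩ cHc| = |H ∩ cHc⁻¹|, where cHc⁻¹ = {c·h·c⁻¹ : h ∈ H}. -/
/-! Pick `x = c h₀ c` in `H ∩ cHc`. Right multiplication by `x⁻¹` fixes `H` setwise and sends
`c h c` to `c (h h₀⁻¹) c⁻¹`, so it maps `cHc` onto `cHc⁻¹`; being injective, it is a bijection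
`H ∩ cHc ≃ H ∩ cHc⁻¹`. -/

namespace Subgroup

variable {G : Type*} [Group G] (H : Subgroup G)

theorem image_mul_right_of_mem {x : G} (hx : x ∈ H) :
    (fun y => y * x) '' (H : Set G) = H := by
  ext y
  simp only [Set.image_mul_right, Set.mem_preimage, SetLike.mem_coe]
  exact H.mul_mem_cancel_right (H.inv_mem hx)

theorem image_mul_right_inter_of_mem {x : G} (hx : x ∈ H) (S : Set G) :
    (fun y => y * x) '' ((H : Set G) ∩ S) = (H : Set G) ∩ (fun y => y * x) '' S := by
  rw [Set.image_inter (mul_left_injective x), H.image_mul_right_of_mem hx]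

theorem image_mul_inv_image_mul_mul {c h₀ : G} (hh₀ : h₀ ∈ H) :
    (fun y => y * (c * h₀ * c)⁻¹) '' ((fun h => c * h * c) '' (H : Set G)) =
      (fun h => c * h * c⁻¹) '' (H : Set G) := by
  have hcomp : (fun y => y * (c * h₀ * c)⁻¹) ∘ (fun h => c * h * c) =
      (fun h => c * h * c⁻¹) ∘ (fun h => h * h₀⁻¹) := by
    funext h
    simp only [Function.comp_apply]
    group
  rw [← Set.image_comp, hcomp, Set.image_comp,
    H.image_mul_right_of_mem (H.inv_mem hh₀)]

end Subgroup

theorem card_inter_cHc_eq_card_inter_cHcinv_general {G : Type} [Group G] (H : Subgroup G)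
    (c : G)
    (hne : ((H : Set G) ∩ (fun h => c * h * c) '' (H : Set G)).Nonempty) :
    ((H : Set G) ∩ (fun h => c * h * c) '' (H : Set G)).ncard =
      ((H : Set G) ∩ (fun h => c * h * c⁻¹) '' (H : Set G)).ncard := by
  obtain ⟨_, hxH, h₀, hh₀, rfl⟩ := hne
  rw [← Set.ncard_image_of_injective _ (mul_left_injective (c * h₀ * c)⁻¹),
    H.image_mul_right_inter_of_mem (H.inv_mem hxH), H.image_mul_inv_image_mul_mul hh₀]

theorem card_inter_cHc_eq_card_inter_cHcinv {G : Type} [Group G] (H : Subgroup G)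
    (hH : Finite H) (c : G)
    (hne : ((H : Set G) ∩ (fun h => c * h * c) '' (H : Set G)).Nonempty) :
    ((H : Set G) ∩ (fun h => c * h * c) '' (H : Set G)).ncard =
      ((H : Set G) ∩ (fun h => c * h * c⁻¹) '' (H : Set G)).ncard :=
  card_inter_cHc_eq_card_inter_cHcinv_general H c hne
end
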